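/- arXiv:2111.11216 — 11 statements merged into one kernel-verified Lean document; each statement's English description precedes it below -/
import Mathlib

section
/- Let K be a field with at least 3 elements, let V be a finite-dimensional K-vector space, and let G' ≤ H ≤ G be subgroups of GL(V). Assume that V is a semisimple representation of G and a semisimple representation of G', and that the centralizer of G in GL(V) equals the centralizer of G' in GL(V). Then V is a semisimple representation of H, and the centralizer of H in GL(V) equals the centralizer of G in GL(V). -/
/-!
Let `A` be the subalgebra of `End K V` generated by `G'`. Since `V` is a semisimple `A`-module,
the double centralizer (Jacobson density) theorem gives `A = Z(Z(A))`, where `Z` is the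
centralizer in `End K V`. Every `c ∈ Z(A)` is a sum `u + v` of two automorphisms that commute
with everything commuting with `c` (Fitting decomposition of `c`; this is where `3 ≤ #K` enters).
Thus `u, v` centralize `G'`, hence `G`, so `G` commutes with `c`: that is, `G ⊆ Z(Z(A)) = A`.
Consequently `G'`, `H` and `G` have the same invariant subspaces, and the centralizers are
sandwiched between those of `G'` and `G`.
-/

open Module (End)
open LinearMap

section Invariant

variable (R : Type*) {M F : Type*} [Semiring R] [AddCommMonoid M] [Module R M] [FunLike F M M]

def invariantSubspaces (S : Set F) : Set (Submodule R M) :=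
  {W | ∀ a ∈ S, ∀ v ∈ W, a v ∈ W}

def HasInvariantComplements (S : Set F) : Prop :=
  ∀ W ∈ invariantSubspaces R S, ∃ W', IsCompl W W' ∧ W' ∈ invariantSubspaces R S

variable {R}

theorem invariantSubspaces_antitone : Antitone (invariantSubspaces R (M := M) (F := F)) :=
  fun _ _ hST _ hW a ha => hW a (hST ha)

end Invariant

section Endomorphisms

variable {R M : Type*}

@[simp]
theorem invariantSubspaces_image_toLinearMap [Semiring R] [AddCommMonoid M] [Module R M]
    (S : Set (M ≃ₗ[R] M)) :
    invariantSubspaces R (LinearEquiv.toLinearMap '' S) = invariantSubspaces R S :=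
  Set.ext fun _ => Set.forall_mem_image

@[simp]
theorem invariantSubspaces_adjoin [CommSemiring R] [AddCommMonoid M] [Module R M]
    (S : Set (End R M)) :
    invariantSubspaces R (Algebra.adjoin R S : Set (End R M)) = invariantSubspaces R S := by
  refine (invariantSubspaces_antitone Algebra.subset_adjoin).antisymm fun W hW a ha => ?_
  induction ha using Algebra.adjoin_induction with
  | mem a ha => exact hW a ha
  | algebraMap r => exact fun v hv => W.smul_mem r hv
  | add a b _ _ ha hb => exact fun v hv => W.add_mem (ha v hv) (hb v hv)
  | mul a b _ _ ha hb => exact fun v hv => ha _ (hb v hv)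

theorem LinearEquiv.commute_coe_iff [Semiring R] [AddCommMonoid M] [Module R M]
    {e f : M ≃ₗ[R] M} : Commute (e : End R M) f ↔ Commute e f :=
  commute_map_iff (f := LinearEquiv.automorphismGroup.toLinearMapMonoidHom)
    LinearEquiv.toLinearMap_injective

theorem Commute.ker_mem_invtSubmodule [Semiring R] [AddCommMonoid M] [Module R M]
    {f g : End R M} (h : Commute f g) :
    ker g ∈ f.invtSubmodule := fun x hx => by
  rw [Submodule.mem_comap, mem_ker, ← Module.End.mul_apply, ← h.eq, Module.End.mul_apply,
    mem_ker.1 hx, map_zero]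

theorem Commute.range_mem_invtSubmodule [Semiring R] [AddCommMonoid M] [Module R M]
    {f g : End R M} (h : Commute f g) :
    range g ∈ f.invtSubmodule := by
  rintro _ ⟨x, rfl⟩
  exact ⟨f x, by rw [← Module.End.mul_apply, ← h.eq, Module.End.mul_apply]⟩

theorem LinearMap.injective_of_isCompl [Ring R] [AddCommGroup M] [Module R M]
    {p q : Submodule R M} (hpq : IsCompl p q) {f : End R M}
    (hp : p ∈ f.invtSubmodule) (hq : q ∈ f.invtSubmodule)
    (hfp : Disjoint p (ker f)) (hfq : Disjoint q (ker f)) : Function.Injective f := by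
  refine (injective_iff_map_eq_zero f).2 fun x hx => ?_
  obtain ⟨y, z, hy, hz, rfl⟩ := Submodule.codisjoint_iff_exists_add_eq.1 hpq.codisjoint x
  have hfy : f y = 0 := by
    refine Submodule.disjoint_def.1 hpq.disjoint _ (hp hy) ?_
    rw [eq_neg_of_add_eq_zero_left (a := f y) (by rwa [← map_add])]
    exact q.neg_mem (hq hz)
  have hfz : f z = 0 := by rwa [map_add, hfy, zero_add] at hx
  rw [(disjoint_ker.1 hfp) y hy hfy, (disjoint_ker.1 hfq) z hz hfz, add_zero]

end Endomorphisms

section Fitting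

variable {K V : Type*} [Field K] [AddCommGroup V] [Module K V] [FiniteDimensional K V]

theorem Module.End.exists_fitting_projection (c : End K V) :
    ∃ π : End K V, IsIdempotentElem π ∧ (∀ g : End K V, Commute g c → Commute g π) ∧
      range π ≤ c.maxGenEigenspace 0 ∧ Disjoint (ker π) (ker c) := by
  obtain ⟨m, hcompl⟩ :=
    ((Filter.tendsto_add_atTop_nat 1).eventually c.eventually_isCompl_ker_pow_range_pow).exists
  have hπ := Submodule.isIdempotentElem_projection hcompl
  refine ⟨_, hπ, fun g hg => (hπ.commute_iff.2 ⟨?_, ?_⟩).symm, ?_, ?_⟩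
  · rw [Submodule.range_projection]
    exact (hg.pow_right _).ker_mem_invtSubmodule
  · rw [Submodule.ker_projection]
    exact (hg.pow_right _).range_mem_invtSubmodule
  · rw [Submodule.range_projection, ← genEigenspace_zero_nat]
    exact (c.genEigenspace 0).monotone le_top
  · rw [Submodule.ker_projection]
    refine hcompl.disjoint.symm.mono_right ?_
    rw [pow_succ, Module.End.mul_eq_comp]
    exact ker_le_ker_comp c _

theorem Module.End.exists_linearEquiv_add_eq (hK : 3 ≤ Cardinal.mk K) (c : End K V) :
    ∃ u v : V ≃ₗ[K] V, (u : End K V) + v = c ∧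
      ∀ g : End K V, Commute g c → Commute g u ∧ Commute g v := by
  obtain ⟨a, ha1, ha0⟩ := Cardinal.exists_ne_ne_of_three_le hK 1 0
  obtain ⟨π, hπ, hπc, hR, hK⟩ := c.exists_fitting_projection
  obtain ⟨hcR, hcK⟩ := hπ.commute_iff.1 (hπc c (.refl c)).symm
  -- `u` is `a` on the nilpotent part `range π` and `a • c` on the invertible part `ker π`, so
  -- `c - u` is `c - a` and `(1 - a) • c` there: all four are injective as `a ∉ {0, 1}`.
  set u := a • (π + c * (1 - π))
  have huR : ∀ x ∈ range π, u x = a • x := fun x hx => by simp [u, hπ.mem_range_iff.1 hx]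
  have huK : ∀ x ∈ ker π, u x = a • c x := fun x hx => by simp [u, mem_ker.1 hx]
  have hvR : ∀ x ∈ range π, (c - u) x = c x - a • x := fun x hx => by simp [huR x hx]
  have hvK : ∀ x ∈ ker π, (c - u) x = (1 - a) • c x := fun x hx => by
    simp [huK x hx, sub_smul]
  have hu : Function.Injective u := by
    refine injective_of_isCompl hπ.isCompl
      (fun x hx => show u x ∈ range π by rw [huR x hx]; exact Submodule.smul_mem _ a hx)
      (fun x hx => show u x ∈ ker π by rw [huK x hx]; exact Submodule.smul_mem _ a (hcK hx))
      ?_ ?_ <;>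
      refine disjoint_ker.2 fun x hx hux => ?_
    · exact (smul_eq_zero.1 (huR x hx ▸ hux)).resolve_left ha0
    · exact disjoint_ker.1 hK x hx ((smul_eq_zero.1 (huK x hx ▸ hux)).resolve_left ha0)
  have hv : Function.Injective (c - u) := by
    refine injective_of_isCompl hπ.isCompl
      (fun x hx => show (c - u) x ∈ range π by
        rw [hvR x hx]; exact Submodule.sub_mem _ (hcR hx) (Submodule.smul_mem _ a hx))
      (fun x hx => show (c - u) x ∈ ker π by
        rw [hvK x hx]; exact Submodule.smul_mem _ _ (hcK hx)) ?_ ?_ <;>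
      refine disjoint_ker.2 fun x hx hvx => ?_
    · exact Submodule.disjoint_def.1 ((c.disjoint_genEigenspace ha0.symm ⊤ 1).mono_left hR) x hx
        (mem_eigenspace_iff.2 (sub_eq_zero.1 (hvR x hx ▸ hvx)))
    · exact disjoint_ker.1 hK x hx
        ((smul_eq_zero.1 (hvK x hx ▸ hvx)).resolve_left (sub_ne_zero.2 ha1.symm))
  refine ⟨.ofInjectiveEndo u hu, .ofInjectiveEndo _ hv, add_sub_cancel u c, fun g hg => ?_⟩
  have hgπ := hπc g hg
  have hgu : Commute g u :=
    (hgπ.add_right (hg.mul_right ((Commute.one_right g).sub_right hgπ))).smul_right a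
  exact ⟨hgu, hg.sub_right hgu⟩

end Fitting

section DoubleCentralizer

variable {K V : Type*} [Field K] [AddCommGroup V] [Module K V]

theorem Subalgebra.isSemisimpleModule_of_hasInvariantComplements (A : Subalgebra K (End K V))
    (h : HasInvariantComplements K (A : Set (End K V))) : IsSemisimpleModule A V := by
  refine (isSemisimpleModule_iff A V).2 ⟨fun p => ?_⟩
  obtain ⟨W', hcompl, hW'⟩ := h (p.restrictScalars K) fun a ha v hv => p.smul_mem ⟨a, ha⟩ hv
  let q : Submodule A V := { W' with smul_mem' := fun a v hv => hW' a a.2 v hv }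
  exact ⟨q, (Submodule.isCompl_restrictScalars_iff K).1 hcompl⟩

theorem Subalgebra.centralizer_centralizer_le_of_isSemisimpleModule [FiniteDimensional K V]
    (A : Subalgebra K (End K V)) [IsSemisimpleModule A V] :
    centralizer K (centralizer K (A : Set (End K V)) : Set (End K V)) ≤ A := by
  classical
  intro f hf
  let F : End (End A V) V :=
    { toFun := f
      map_add' := f.map_add
      map_smul' := fun φ v => by
        have hφ : φ.restrictScalars K ∈ centralizer K (A : Set (End K V)) :=
          fun a ha => LinearMap.ext fun w => (φ.map_smul ⟨a, ha⟩ w).symm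
        exact (LinearMap.congr_fun (hf _ hφ) v).symm }
  let b := Module.finBasis K V
  obtain ⟨r, hr⟩ := jacobson_density F (Finset.univ.image b)
  have : f = r := b.ext fun i => hr _ (Finset.mem_image_of_mem b (Finset.mem_univ i))
  exact this ▸ r.2

theorem coe_mem_centralizer_centralizer_of_centralizer_le [FiniteDimensional K V]
    (hK : 3 ≤ Cardinal.mk K) {S T : Set (V ≃ₗ[K] V)}
    (hST : Subgroup.centralizer S ≤ Subgroup.centralizer T) {g : V ≃ₗ[K] V} (hg : g ∈ T) :
    (g : End K V) ∈ Subalgebra.centralizer K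
      (Subalgebra.centralizer K (LinearEquiv.toLinearMap '' S) : Set (End K V)) := by
  intro c hc
  obtain ⟨u, v, rfl, huv⟩ := c.exists_linearEquiv_add_eq hK
  have hSc : ∀ s ∈ S, Commute (s : End K V) (u + v) := fun s hs => hc _ ⟨s, hs, rfl⟩
  have hgw (w : V ≃ₗ[K] V) (hw : ∀ s ∈ S, Commute (s : End K V) w) :
      Commute (g : End K V) w :=
    LinearEquiv.commute_coe_iff.2 <|
      (Subgroup.mem_centralizer_iff.1 (hST (Subgroup.mem_centralizer_iff.2 fun s hs =>
        LinearEquiv.commute_coe_iff.1 (hw s hs))) g hg)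
  exact ((hgw u fun s hs => (huv _ (hSc s hs)).1).add_right
    (hgw v fun s hs => (huv _ (hSc s hs)).2)).symm.eq

theorem image_subset_adjoin_of_centralizer_le [FiniteDimensional K V] (hK : 3 ≤ Cardinal.mk K)
    {S T : Set (V ≃ₗ[K] V)} (hS : HasInvariantComplements K S)
    (hST : Subgroup.centralizer S ≤ Subgroup.centralizer T) :
    LinearEquiv.toLinearMap '' T ⊆ Algebra.adjoin K (LinearEquiv.toLinearMap '' S) := by
  set A := Algebra.adjoin K (LinearEquiv.toLinearMap '' S)
  have : IsSemisimpleModule A V := A.isSemisimpleModule_of_hasInvariantComplements <| by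
    rwa [HasInvariantComplements, invariantSubspaces_adjoin, invariantSubspaces_image_toLinearMap]
  rintro _ ⟨g, hg, rfl⟩
  exact A.centralizer_centralizer_le_of_isSemisimpleModule <|
    Subalgebra.centralizer_le _ _ _ (Subalgebra.centralizer_le _ _ _ Algebra.subset_adjoin)
      (coe_mem_centralizer_centralizer_of_centralizer_le hK hST hg)

theorem invariantSubspaces_le_of_centralizer_le [FiniteDimensional K V] (hK : 3 ≤ Cardinal.mk K)
    {S T : Set (V ≃ₗ[K] V)} (hS : HasInvariantComplements K S)
    (hST : Subgroup.centralizer S ≤ Subgroup.centralizer T) :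
    invariantSubspaces K S ≤ invariantSubspaces K T := by
  rw [← invariantSubspaces_image_toLinearMap, ← invariantSubspaces_adjoin,
    ← invariantSubspaces_image_toLinearMap T]
  exact invariantSubspaces_antitone (image_subset_adjoin_of_centralizer_le hK hS hST)

end DoubleCentralizer

/-- Let `K` be a field with at least 3 elements, `V` a
finite-dimensional `K`-vector space, and `G' ≤ H ≤ G` subgroups of `GL(V)`
(realized as the group of linear automorphisms `V ≃ₗ[K] V`).  If `V` is a
semisimple representation of `G` and of `G'` (every invariant subspace has an
invariant complement), and the centralizers of `G` and `G'` in `GL(V)` agree,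
then `V` is a semisimple representation of `H` and the centralizer of `H`
equals that of `G`. -/
theorem stmt_0 {K V : Type*} [Field K] [AddCommGroup V] [Module K V]
    [FiniteDimensional K V] (hK : 3 ≤ Cardinal.mk K)
    (G' H G : Subgroup (V ≃ₗ[K] V)) (hG'H : G' ≤ H) (hHG : H ≤ G)
    (hGss : ∀ W : Submodule K V, (∀ g ∈ G, ∀ v ∈ W, g v ∈ W) →
      ∃ W' : Submodule K V, IsCompl W W' ∧ ∀ g ∈ G, ∀ v ∈ W', g v ∈ W')
    (hG'ss : ∀ W : Submodule K V, (∀ g ∈ G', ∀ v ∈ W, g v ∈ W) →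
      ∃ W' : Submodule K V, IsCompl W W' ∧ ∀ g ∈ G', ∀ v ∈ W', g v ∈ W')
    (hcent : Subgroup.centralizer (G : Set (V ≃ₗ[K] V)) =
      Subgroup.centralizer (G' : Set (V ≃ₗ[K] V))) :
    (∀ W : Submodule K V, (∀ g ∈ H, ∀ v ∈ W, g v ∈ W) →
      ∃ W' : Submodule K V, IsCompl W W' ∧ ∀ g ∈ H, ∀ v ∈ W', g v ∈ W') ∧
    Subgroup.centralizer (H : Set (V ≃ₗ[K] V)) =
      Subgroup.centralizer (G : Set (V ≃ₗ[K] V)) := by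
  have hinvH : invariantSubspaces K (H : Set (V ≃ₗ[K] V)) = invariantSubspaces K (G : Set _) :=
    le_antisymm ((invariantSubspaces_antitone hG'H).trans
      (invariantSubspaces_le_of_centralizer_le hK hG'ss hcent.ge))
      (invariantSubspaces_antitone hHG)
  refine ⟨?_, (hcent ▸ Subgroup.centralizer_le hG'H).antisymm (Subgroup.centralizer_le hHG)⟩
  change HasInvariantComplements K (H : Set (V ≃ₗ[K] V))
  rw [HasInvariantComplements, hinvH]
  exact hGss
end

section
/- Let E be a finite-dimensional real inner product space with induced distance d, and let Σ be a finite set of linear forms on E. Then there exist real constants c(Σ) > 0 and c'(Σ) > 0 such that for every function μ : Σ → ℝ with μ(λ) ≤ 0 for all λ ∈ Σ, setting h_μ(x) = max of 0 and of λ(x) + μ(λ) for λ ∈ Σ, and C_μ = {x ∈ E : h_μ(x) = 0}, one has c(Σ)·d(x, C_μ) ≤ h_μ(x) ≤ c'(Σ)·d(x, C_μ) for all x ∈ E. -/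
open scoped Classical

/-- `hMu S μ x = max({0} ∪ {λ(x) + μ(λ) : λ ∈ S})` for a finite set `S` of
linear forms on `E` and `μ : Σ → ℝ`. -/
noncomputable def hMu {E : Type*} [NormedAddCommGroup E] [InnerProductSpace ℝ E]
    (S : Finset (E →ₗ[ℝ] ℝ)) (μ : (E →ₗ[ℝ] ℝ) → ℝ) (x : E) : ℝ :=
  (insert (0 : ℝ) (S.image fun l => l x + μ l)).max' (Finset.insert_nonempty _ _)


open scoped InnerProductSpace

noncomputable section HoffmanAux

variable {E : Type*} [NormedAddCommGroup E] [InnerProductSpace ℝ E]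

/-- The cone of nonnegative combinations of a finite set of vectors. -/
def coneOf (s : Finset E) : Set E :=
  {x | ∃ t : E → ℝ, (∀ v ∈ s, 0 ≤ t v) ∧ ∑ v ∈ s, t v • v = x}

lemma zero_mem_coneOf (s : Finset E) : (0 : E) ∈ coneOf s :=
  ⟨0, fun _ _ => le_rfl, by simp⟩

lemma coneOf_mono {s₁ s₂ : Finset E} (h : s₁ ⊆ s₂) : coneOf s₁ ⊆ coneOf s₂ := by
  rintro x ⟨t, ht, rfl⟩
  refine ⟨fun v => if v ∈ s₁ then t v else 0, ?_, ?_⟩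
  · intro v _; dsimp only; split
    · exact ht v ‹_›
    · exact le_rfl
  rw [← Finset.sum_subset h]
  · exact Finset.sum_congr rfl fun v hv => by simp only [if_pos hv]
  · intro v _ hv; simp only [if_neg hv, zero_smul]

lemma mem_coneOf_self {s : Finset E} {v : E} (hv : v ∈ s) : v ∈ coneOf s := by
  refine ⟨fun w => if w = v then 1 else 0, fun w _ => by dsimp only; split <;> norm_num, ?_⟩
  have h1 : ∀ w ∈ s, (fun w => if w = v then (1:ℝ) else 0) w • w
      = if w = v then w else 0 := by
    intro w _; dsimp only; split <;> simp [*]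
  rw [Finset.sum_congr rfl h1, Finset.sum_ite_eq' s v (fun w => w), if_pos hv]

/-- `coneOf s` as a convex cone. -/
def coneOfCone (s : Finset E) : ConvexCone ℝ E where
  carrier := coneOf s
  smul_mem' := by
    rintro c hc x ⟨t, ht, rfl⟩
    refine ⟨fun v => c * t v, fun v hv => mul_nonneg hc.le (ht v hv), ?_⟩
    rw [Finset.smul_sum]
    exact Finset.sum_congr rfl fun v _ => by dsimp only; rw [smul_smul]
  add_mem' := by
    rintro x ⟨t, ht, rfl⟩ y ⟨u, hu, rfl⟩
    refine ⟨fun v => t v + u v, fun v hv => add_nonneg (ht v hv) (hu v hv), ?_⟩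
    rw [← Finset.sum_add_distrib]
    exact Finset.sum_congr rfl fun v _ => by dsimp only; rw [add_smul]

/-- Conic Carathéodory. -/
lemma coneOf_caratheodory (s : Finset E) :
    ∀ x ∈ coneOf s, ∃ s' ⊆ s,
      LinearIndependent ℝ (fun v : ↥s' => (v : E)) ∧ x ∈ coneOf s' := by
  induction s using Finset.strongInduction with
  | _ s ih =>
  intro x hx
  by_cases hind : LinearIndependent ℝ (fun v : ↥s => (v : E))
  · exact ⟨s, subset_rfl, hind, hx⟩
  obtain ⟨t, ht, hsum⟩ := hx
  obtain ⟨g, hg0, i₁, hi₁⟩ := Fintype.not_linearIndependent_iff.1 hind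
  obtain ⟨a, ha0, i₂, hi₂⟩ : ∃ a : ↥s → ℝ, ∑ i, a i • (i : E) = 0 ∧ ∃ i, 0 < a i := by
    rcases hi₁.lt_or_gt with h | h
    · exact ⟨-g, by simpa using hg0, i₁, by simpa using h⟩
    · exact ⟨g, hg0, i₁, h⟩
  set P : Finset ↥s := Finset.univ.filter (fun i => 0 < a i) with hP
  have hi₂P : i₂ ∈ P := by simp [hP, hi₂]
  obtain ⟨i₀, hi₀P, hi₀min⟩ :=
    Finset.exists_min_image P (fun i => t (i : E) / a i) ⟨i₂, hi₂P⟩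
  have hai₀ : 0 < a i₀ := by simpa [hP] using hi₀P
  set lam : ℝ := t (i₀ : E) / a i₀ with hlam
  have hlam0 : 0 ≤ lam := div_nonneg (ht _ i₀.2) hai₀.le
  set A : E → ℝ := fun v => if h : v ∈ s then a ⟨v, h⟩ else 0 with hA
  have hAi : ∀ i : ↥s, A (i : E) = a i := by
    intro i; simp only [hA, dif_pos i.2]
  have hArel : ∑ v ∈ s, A v • v = 0 := by
    rw [← Finset.sum_attach s (fun v => A v • v)]
    rw [Finset.sum_congr rfl (fun i _ => by rw [hAi i])]
    exact ha0
  set t' : E → ℝ := fun v => t v - lam * A v with ht'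
  have ht'sum : ∑ v ∈ s, t' v • v = x := by
    simp only [ht', sub_smul, Finset.sum_sub_distrib, mul_smul]
    rw [← Finset.smul_sum, hArel, smul_zero, sub_zero, hsum]
  have ht'nonneg : ∀ v ∈ s, 0 ≤ t' v := by
    intro v hv
    have : A v = a ⟨v, hv⟩ := by simp only [hA, dif_pos hv]
    simp only [ht', this, sub_nonneg]
    rcases lt_or_ge 0 (a ⟨v, hv⟩) with h | h
    · have hmem : (⟨v, hv⟩ : ↥s) ∈ P := by simp [hP, h]
      have := hi₀min _ hmem
      calc lam * a ⟨v, hv⟩ ≤ (t v / a ⟨v, hv⟩) * a ⟨v, hv⟩ :=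
            mul_le_mul_of_nonneg_right this h.le
        _ = t v := div_mul_cancel₀ _ h.ne'
    · calc lam * a ⟨v, hv⟩ ≤ 0 := mul_nonpos_of_nonneg_of_nonpos hlam0 h
        _ ≤ t v := ht v hv
  have ht'zero : t' (i₀ : E) = 0 := by
    simp only [ht', hAi i₀, hlam, div_mul_cancel₀ _ hai₀.ne', sub_self]
  have hxerase : x ∈ coneOf (s.erase (i₀ : E)) := by
    refine ⟨t', fun v hv => ht'nonneg v (Finset.mem_of_mem_erase hv), ?_⟩
    rw [Finset.sum_erase s (by rw [ht'zero, zero_smul]), ht'sum]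
  obtain ⟨s', hs', hind', hx'⟩ := ih _ (Finset.erase_ssubset i₀.2) x hxerase
  exact ⟨s', hs'.trans (Finset.erase_subset _ _), hind', hx'⟩

variable [FiniteDimensional ℝ E]

set_option linter.unusedSectionVars false

lemma indep_bound {s : Finset E} (h : LinearIndependent ℝ (fun v : ↥s => (v : E))) :
    ∃ K : ℝ, 0 < K ∧ ∀ t : E → ℝ, ∑ v ∈ s, t v ≤ K * ‖∑ v ∈ s, t v • v‖ := by
  set T : (↥s → ℝ) →ₗ[ℝ] E := Fintype.linearCombination ℝ (fun i : ↥s => (i : E)) with hT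
  have hTapp : ∀ g : ↥s → ℝ, T g = ∑ i, g i • (i : E) := fun g => rfl
  have hker : LinearMap.ker T = ⊥ := by
    rw [LinearMap.ker_eq_bot']
    intro g hg
    funext i
    exact Fintype.linearIndependent_iff.1 h g (by rw [← hTapp]; exact hg) i
  obtain ⟨K, hK, hanti⟩ := T.exists_antilipschitzWith hker
  refine ⟨(s.card + 1) * (K + 1), by positivity, ?_⟩
  intro t
  set g : ↥s → ℝ := fun i => t (i : E) with hg
  have h1 : ∑ v ∈ s, t v = ∑ i : ↥s, g i := (Finset.sum_attach s t).symm
  have h2 : ∑ v ∈ s, t v • v = T g := by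
    rw [hTapp]; exact (Finset.sum_attach s (fun v => t v • v)).symm
  have hnorm : ‖g‖ ≤ K * ‖T g‖ := by
    have := hanti.le_mul_dist g 0
    simpa [dist_zero_right, map_zero] using this
  have h3 : ∑ i : ↥s, g i ≤ (s.card : ℝ) * ‖g‖ := by
    have : ∀ i ∈ Finset.univ, g i ≤ ‖g‖ := fun i _ =>
      (le_abs_self _).trans ((Real.norm_eq_abs _).symm ▸ norm_le_pi_norm g i)
    calc ∑ i : ↥s, g i ≤ Finset.univ.card • ‖g‖ := Finset.sum_le_card_nsmul _ _ _ this
      _ = (s.card : ℝ) * ‖g‖ := by rw [nsmul_eq_mul, Finset.card_univ, Fintype.card_coe]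
  have hgnn : (0:ℝ) ≤ ‖T g‖ := norm_nonneg _
  calc ∑ v ∈ s, t v = ∑ i : ↥s, g i := h1
    _ ≤ (s.card : ℝ) * ‖g‖ := h3
    _ ≤ (s.card : ℝ) * (K * ‖T g‖) :=
        mul_le_mul_of_nonneg_left hnorm (by positivity)
    _ ≤ ((s.card : ℝ) + 1) * ((K + 1) * ‖T g‖) := by
        have hKnn : (0:ℝ) ≤ K := K.coe_nonneg
        have hgn : (0:ℝ) ≤ ‖g‖ := norm_nonneg _
        nlinarith
    _ = (s.card + 1) * (K + 1) * ‖∑ v ∈ s, t v • v‖ := by rw [← h2]; ring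

lemma indep_closed {s : Finset E} (h : LinearIndependent ℝ (fun v : ↥s => (v : E))) :
    IsClosed (coneOf s) := by
  set T : (↥s → ℝ) →ₗ[ℝ] E := Fintype.linearCombination ℝ (fun i : ↥s => (i : E)) with hT
  have hTapp : ∀ g : ↥s → ℝ, T g = ∑ i, g i • (i : E) := fun g => rfl
  have hker : LinearMap.ker T = ⊥ := by
    rw [LinearMap.ker_eq_bot']
    intro g hg
    funext i
    exact Fintype.linearIndependent_iff.1 h g (by rw [← hTapp]; exact hg) i
  have hemb := LinearMap.isClosedEmbedding_of_injective (f := T) hker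
  have hset : coneOf s = T '' {g : ↥s → ℝ | ∀ i, 0 ≤ g i} := by
    ext x
    constructor
    · rintro ⟨t, ht, rfl⟩
      refine ⟨fun i => t (i : E), fun i => ht _ i.2, ?_⟩
      rw [hTapp]; exact Finset.sum_attach s (fun v => t v • v)
    · rintro ⟨g, hg, rfl⟩
      refine ⟨fun v => if hv : v ∈ s then g ⟨v, hv⟩ else 0, ?_, ?_⟩
      · intro v hv; simp only [dif_pos hv]; exact hg _
      · rw [hTapp, ← Finset.sum_attach s]
        exact Finset.sum_congr rfl fun i _ => by simp only [dif_pos i.2]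
  rw [hset]
  apply hemb.isClosedMap
  have : {g : ↥s → ℝ | ∀ i, 0 ≤ g i} = ⋂ i, {g : ↥s → ℝ | 0 ≤ g i} := by
    ext g; simp [Set.mem_iInter]
  rw [this]
  exact isClosed_iInter fun i => isClosed_le continuous_const (continuous_apply i)

lemma coneOf_closed (s : Finset E) : IsClosed (coneOf s) := by
  have heq : coneOf s = ⋃ s' ∈ s.powerset.filter
      (fun s' : Finset E => LinearIndependent ℝ (fun v : ↥s' => (v : E))), coneOf s' := by
    apply Set.Subset.antisymm
    · intro x hx
      obtain ⟨s', hsub, hind, hmem⟩ := coneOf_caratheodory s x hx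
      exact Set.mem_biUnion (Finset.mem_filter.2 ⟨Finset.mem_powerset.2 hsub, hind⟩) hmem
    · apply Set.iUnion₂_subset
      intro s' hs'
      exact coneOf_mono (Finset.mem_powerset.1 (Finset.mem_filter.1 hs').1)
  rw [heq]
  exact isClosed_biUnion_finset
    (fun s' hs' => indep_closed (Finset.mem_filter.1 hs').2)

/-- The Riesz vector of a linear form. -/
def rz (l : E →ₗ[ℝ] ℝ) : E :=
  (InnerProductSpace.toDual ℝ E).symm (LinearMap.toContinuousLinearMap l)

lemma inner_rz (l : E →ₗ[ℝ] ℝ) (y : E) : ⟪rz l, y⟫_ℝ = l y := by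
  rw [rz, InnerProductSpace.toDual_symm_apply]
  simp

end HoffmanAux

section HMu

variable {E : Type*} [NormedAddCommGroup E] [InnerProductSpace ℝ E]
variable (S : Finset (E →ₗ[ℝ] ℝ)) (μ : (E →ₗ[ℝ] ℝ) → ℝ)

lemma hMu_nonneg (x : E) : 0 ≤ hMu S μ x :=
  Finset.le_max' _ _ (Finset.mem_insert_self _ _)

lemma le_hMu {l : E →ₗ[ℝ] ℝ} (hl : l ∈ S) (x : E) : l x + μ l ≤ hMu S μ x := by
  have hm : l x + μ l ∈ insert (0:ℝ) (S.image fun l => l x + μ l) :=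
    Finset.mem_insert_of_mem (Finset.mem_image_of_mem (fun l => l x + μ l) hl)
  exact Finset.le_max' _ _ hm

lemma hMu_le {b : ℝ} {x : E} (hb : 0 ≤ b) (h : ∀ l ∈ S, l x + μ l ≤ b) :
    hMu S μ x ≤ b := by
  apply Finset.max'_le
  intro y hy
  rcases Finset.mem_insert.1 hy with rfl | hy
  · exact hb
  · obtain ⟨l, hl, rfl⟩ := Finset.mem_image.1 hy
    exact h l hl

lemma hMu_eq_zero_iff (x : E) : hMu S μ x = 0 ↔ ∀ l ∈ S, l x + μ l ≤ 0 :=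
  ⟨fun h l hl => h ▸ le_hMu S μ hl x,
   fun h => le_antisymm (hMu_le S μ le_rfl h) (hMu_nonneg S μ x)⟩

end HMu

/-- Let `E` be a finite-dimensional real inner product space
with induced distance `d`, and `Σ` a finite set of linear forms on `E`.  There
exist constants `c(Σ), c'(Σ) > 0` such that for every `μ : Σ → ℝ_{≤0}`, with
`h_μ(x) = max({0} ∪ {λ(x) + μ(λ) : λ ∈ Σ})` and `C_μ = {x : h_μ(x) = 0}`, one
has `c(Σ)·d(x, C_μ) ≤ h_μ(x) ≤ c'(Σ)·d(x, C_μ)` for all `x ∈ E`. -/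
theorem stmt_2 {E : Type*} [NormedAddCommGroup E] [InnerProductSpace ℝ E]
    [FiniteDimensional ℝ E] (S : Finset (E →ₗ[ℝ] ℝ)) :
    ∃ c c' : ℝ, 0 < c ∧ 0 < c' ∧
      ∀ μ : (E →ₗ[ℝ] ℝ) → ℝ, (∀ l ∈ S, μ l ≤ 0) →
        ∀ x : E,
          c * Metric.infDist x {y : E | hMu S μ y = 0} ≤ hMu S μ x ∧
          hMu S μ x ≤ c' * Metric.infDist x {y : E | hMu S μ y = 0} := by
  -- the set of Riesz vectors
  set V : Finset E := S.image rz with hV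
  -- the uniform coefficient bound K
  have hKex : ∀ s' : Finset E, ∃ K : ℝ, 0 < K ∧
      (LinearIndependent ℝ (fun v : ↥s' => (v : E)) →
        ∀ t : E → ℝ, ∑ v ∈ s', t v ≤ K * ‖∑ v ∈ s', t v • v‖) := by
    intro s'
    by_cases h : LinearIndependent ℝ (fun v : ↥s' => (v : E))
    · obtain ⟨K, hK, hb⟩ := indep_bound h
      exact ⟨K, hK, fun _ => hb⟩
    · exact ⟨1, one_pos, fun h' => absurd h' h⟩
  choose Kf hKfpos hKfb using hKex
  set K : ℝ := 1 + ∑ s' ∈ V.powerset, Kf s' with hK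
  have hKpos : 0 < K := by
    have : (0:ℝ) ≤ ∑ s' ∈ V.powerset, Kf s' :=
      Finset.sum_nonneg fun s' _ => (hKfpos s').le
    rw [hK]; linarith
  have hKge : ∀ s' ∈ V.powerset, Kf s' ≤ K := by
    intro s' hs'
    have := Finset.single_le_sum (f := Kf) (fun t _ => (hKfpos t).le) hs'
    rw [hK]; linarith
  -- the Lipschitz constant c'
  set c' : ℝ := 1 + ∑ l ∈ S, ‖LinearMap.toContinuousLinearMap l‖ with hc'
  have hc'pos : 0 < c' := by
    have : (0:ℝ) ≤ ∑ l ∈ S, ‖LinearMap.toContinuousLinearMap l‖ :=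
      Finset.sum_nonneg fun l _ => norm_nonneg _
    rw [hc']; linarith
  refine ⟨1/K, c', by positivity, hc'pos, ?_⟩
  intro μ hμ x
  set C : Set E := {y : E | hMu S μ y = 0} with hC
  have hmemC : ∀ y : E, y ∈ C ↔ ∀ l ∈ S, l y + μ l ≤ 0 := fun y => hMu_eq_zero_iff S μ y
  have hC0 : (0 : E) ∈ C := by
    rw [hmemC]; intro l hl; rw [map_zero, zero_add]; exact hμ l hl
  have hCconv : Convex ℝ C := by
    have : C = ⋂ l ∈ S, {y : E | l y ≤ -μ l} := by
      ext y; simp only [hmemC, Set.mem_iInter, Set.mem_setOf_eq]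
      constructor <;> intro h l hl <;> have := h l hl <;> linarith
    rw [this]
    exact convex_iInter₂ fun l _ => convex_halfSpace_le l.isLinear _
  have hCclosed : IsClosed C := by
    have : C = ⋂ l ∈ S, {y : E | l y + μ l ≤ 0} := by
      ext y; simp only [hmemC, Set.mem_iInter, Set.mem_setOf_eq]
    rw [this]
    exact isClosed_biInter fun l _ =>
      isClosed_le (l.continuous_of_finiteDimensional.add continuous_const) continuous_const
  -- upper bound
  have hub : hMu S μ x ≤ c' * Metric.infDist x C := by
    have h1 : ∀ y ∈ C, hMu S μ x / c' ≤ dist x y := by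
      intro y hy
      rw [div_le_iff₀ hc'pos, mul_comm, dist_eq_norm]
      apply hMu_le S μ (by positivity)
      intro l hl
      have hy' : l y + μ l ≤ 0 := (hmemC y).1 hy l hl
      have hln : l (x - y) ≤ ‖LinearMap.toContinuousLinearMap l‖ * ‖x - y‖ := by
        have := (LinearMap.toContinuousLinearMap l).le_opNorm (x - y)
        have h2 : |l (x - y)| = ‖(LinearMap.toContinuousLinearMap l) (x - y)‖ := by
          simp [Real.norm_eq_abs]
        calc l (x - y) ≤ |l (x - y)| := le_abs_self _
          _ = ‖(LinearMap.toContinuousLinearMap l) (x - y)‖ := h2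
          _ ≤ _ := this
      have hnc' : ‖LinearMap.toContinuousLinearMap l‖ ≤ c' := by
        have := Finset.single_le_sum
          (f := fun l => ‖LinearMap.toContinuousLinearMap l‖)
          (fun t _ => norm_nonneg _) hl
        rw [hc']; linarith
      have hlz : l x + μ l = l (x - y) + (l y + μ l) := by rw [map_sub]; ring
      have : l (x - y) ≤ c' * ‖x - y‖ :=
        hln.trans (mul_le_mul_of_nonneg_right hnc' (norm_nonneg _))
      linarith
    have h2 : hMu S μ x / c' ≤ Metric.infDist x C := by
      rw [Metric.infDist_eq_iInf]
      haveI : Nonempty C := ⟨⟨0, hC0⟩⟩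
      exact le_ciInf fun y => h1 y y.2
    rw [div_le_iff₀ hc'pos] at h2
    linarith
  -- lower bound
  haveI : CompleteSpace E := FiniteDimensional.complete ℝ E
  obtain ⟨p, hpC, hproj⟩ :=
    exists_norm_eq_iInf_of_complete_convex ⟨0, hC0⟩ hCclosed.isComplete hCconv x
  have hD : Metric.infDist x C = ‖x - p‖ := by
    rw [Metric.infDist_eq_iInf, hproj]
    exact iInf_congr fun w => dist_eq_norm x w
  have hchar : ∀ w ∈ C, ⟪x - p, w - p⟫_ℝ ≤ 0 :=
    (norm_eq_iInf_iff_real_inner_le_zero hCconv hpC).1 hproj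
  set I : Finset (E →ₗ[ℝ] ℝ) := S.filter (fun l => l p + μ l = 0) with hI
  set gens : Finset E := I.image rz with hgens
  have hgensV : gens ⊆ V := Finset.image_subset_image (Finset.filter_subset _ _)
  -- the key claim: x - p lies in the cone generated by the active constraints
  have hclaim : x - p ∈ coneOf gens := by
    by_contra hnot
    obtain ⟨u, hu1, hu2⟩ : ∃ y : E, (∀ z ∈ coneOf gens, 0 ≤ ⟪z, y⟫_ℝ) ∧ ⟪y, x - p⟫_ℝ < 0 := by
      obtain ⟨y, hy1, hy2⟩ := ProperCone.hyperplane_separation' (x₀ := x - p)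
        (⟨(coneOfCone gens).toPointedCone (ConvexCone.Pointed.of_nonempty_of_isClosed
          ⟨0, zero_mem_coneOf _⟩ (coneOf_closed gens)), coneOf_closed gens⟩ : ProperCone ℝ E) hnot
      exact ⟨y, fun z hz => hy1 z hz, by rw [real_inner_comm]; exact hy2⟩
    have hlu : ∀ l ∈ I, 0 ≤ l u := by
      intro l hl
      have := hu1 (rz l) (mem_coneOf_self (Finset.mem_image_of_mem _ hl))
      rwa [inner_rz] at this
    have hE : ∀ l : (E →ₗ[ℝ] ℝ), ∃ e : ℝ, 0 < e ∧ (l ∈ S → l p + μ l - e * l u ≤ 0) := by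
      intro l
      by_cases hlS : l ∈ S
      · by_cases hlI : l p + μ l = 0
        · refine ⟨1, one_pos, fun _ => ?_⟩
          have := hlu l (Finset.mem_filter.2 ⟨hlS, hlI⟩)
          rw [hlI]; linarith
        · have hneg : l p + μ l < 0 := lt_of_le_of_ne ((hmemC p).1 hpC l hlS) hlI
          rcases le_or_gt 0 (l u) with h | h
          · exact ⟨1, one_pos, fun _ => by nlinarith⟩
          · refine ⟨(l p + μ l) / l u, div_pos_of_neg_of_neg hneg h, fun _ => ?_⟩
            rw [div_mul_cancel₀ _ h.ne]; linarith
      · exact ⟨1, one_pos, fun h => absurd h hlS⟩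
    choose e hepos heb using hE
    set ε : ℝ := (insert (1:ℝ) (S.image e)).min' (Finset.insert_nonempty _ _) with hε
    have hεpos : 0 < ε := by
      rw [hε, Finset.lt_min'_iff]
      intro b hb
      rcases Finset.mem_insert.1 hb with rfl | hb
      · exact one_pos
      · obtain ⟨l, _, rfl⟩ := Finset.mem_image.1 hb
        exact hepos l
    have hεle : ∀ l ∈ S, ε ≤ e l := fun l hl =>
      Finset.min'_le _ _ (Finset.mem_insert_of_mem (Finset.mem_image_of_mem _ hl))
    have hwC : p - ε • u ∈ C := by
      rw [hmemC]
      intro l hl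
      have heq : l (p - ε • u) + μ l = l p + μ l - ε * l u := by
        rw [map_sub, map_smul, smul_eq_mul]; ring
      rw [heq]
      have h1 := heb l hl
      have hpl : l p + μ l ≤ 0 := (hmemC p).1 hpC l hl
      rcases le_or_gt 0 (l u) with h2 | h2
      · nlinarith [mul_nonneg hεpos.le h2]
      · nlinarith [hεle l hl]
    have h3 := hchar _ hwC
    have h4 : (p - ε • u) - p = -(ε • u) := by abel
    rw [h4, inner_neg_right, real_inner_smul_right] at h3
    have h5 : 0 ≤ ⟪x - p, u⟫_ℝ := by nlinarith
    rw [real_inner_comm] at h5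
    linarith
  -- extract an independent subfamily
  obtain ⟨s', hs'sub, hs'ind, hmemcone⟩ := coneOf_caratheodory gens (x - p) hclaim
  obtain ⟨t, htn, htsum⟩ := hmemcone
  -- the squared distance estimate
  have hsq : ‖x - p‖ ^ 2 ≤ (∑ v ∈ s', t v) * hMu S μ x := by
    have h1 : (‖x - p‖ : ℝ) ^ 2 = ⟪x - p, x - p⟫_ℝ := (real_inner_self_eq_norm_sq _).symm
    have h1' : ⟪∑ v ∈ s', t v • v, x - p⟫_ℝ = ∑ v ∈ s', ⟪t v • v, x - p⟫_ℝ :=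
      sum_inner _ _ _
    rw [htsum] at h1'
    rw [h1, h1']
    have h2 : ∀ v ∈ s', ⟪t v • v, x - p⟫_ℝ ≤ t v * hMu S μ x := by
      intro v hv
      obtain ⟨l, hlI, rfl⟩ := Finset.mem_image.1 (hs'sub hv)
      have hlS : l ∈ S := (Finset.mem_filter.1 hlI).1
      have hlact : l p + μ l = 0 := (Finset.mem_filter.1 hlI).2
      have h3 : ⟪rz l, x - p⟫_ℝ = l x + μ l := by
        rw [inner_rz, map_sub]
        linarith
      rw [real_inner_smul_left, h3]
      exact mul_le_mul_of_nonneg_left (le_hMu S μ hlS x) (htn _ hv)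
    calc ∑ v ∈ s', ⟪t v • v, x - p⟫_ℝ ≤ ∑ v ∈ s', t v * hMu S μ x :=
          Finset.sum_le_sum h2
      _ = (∑ v ∈ s', t v) * hMu S μ x := by rw [Finset.sum_mul]
  -- the coefficient bound
  have hts : ∑ v ∈ s', t v ≤ K * ‖x - p‖ := by
    have h1 := hKfb s' hs'ind t
    rw [htsum] at h1
    exact h1.trans (mul_le_mul_of_nonneg_right
      (hKge s' (Finset.mem_powerset.2 (hs'sub.trans hgensV))) (norm_nonneg _))
  -- conclude the lower bound
  have hlb : (1/K) * Metric.infDist x C ≤ hMu S μ x := by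
    rw [hD]
    rcases eq_or_lt_of_le (norm_nonneg (x - p)) with h0 | h0
    · rw [← h0, mul_zero]; exact hMu_nonneg S μ x
    · have h1 : ‖x - p‖ ^ 2 ≤ K * ‖x - p‖ * hMu S μ x :=
        hsq.trans (mul_le_mul_of_nonneg_right hts (hMu_nonneg S μ x))
      have h2 : ‖x - p‖ ≤ K * hMu S μ x := by nlinarith
      rw [one_div, inv_mul_le_iff₀ hKpos]
      exact h2
  exact ⟨hlb, hub⟩
end

section
/- Let λ₁, …, λ_m be linear forms on ℝ^n with rational coefficients and let c₁, …, c_m be rational numbers. Let C = {x ∈ ℝ^n : λ_i(x) + c_i ≤ 0 for all i = 1, …, m}. Then C equals the topological closure of C ∩ ℚ^n. -/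
open Finset

/-- Rational solutions of a rational linear system are dense in its real solution set. -/
lemma rat_sol_dense (n : ℕ) : ∀ (k : ℕ) (a : Fin k → Fin n → ℚ) (d : Fin k → ℚ)
    (x : Fin n → ℝ), (∀ i, ∑ j, (a i j : ℝ) * x j = (d i : ℝ)) → ∀ ε : ℝ, 0 < ε →
    ∃ q : Fin n → ℚ, (∀ i, ∑ j, (a i j : ℝ) * (q j : ℝ) = (d i : ℝ)) ∧
      ∀ j, |(q j : ℝ) - x j| < ε := by
  intro k
  induction k with
  | zero =>
    intro a d x _ ε hε
    refine ⟨fun j => (exists_rat_near (x j) hε).choose, fun i => i.elim0, fun j => ?_⟩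
    have := (exists_rat_near (x j) hε).choose_spec
    rwa [abs_sub_comm] at this
  | succ k ih =>
    intro a d x hx ε hε
    by_cases hj : ∃ j₀, a 0 j₀ ≠ 0
    · obtain ⟨j₀, h0⟩ := hj
      have h0R : ((a 0 j₀ : ℝ)) ≠ 0 := by exact_mod_cast h0
      set r : Fin k → ℚ := fun i => a i.succ j₀ / a 0 j₀ with hr
      set a' : Fin k → Fin n → ℚ := fun i j => a i.succ j - r i * a 0 j with ha'
      set d' : Fin k → ℚ := fun i => d i.succ - r i * d 0 with hd'
      have hx' : ∀ i, ∑ j, (a' i j : ℝ) * x j = (d' i : ℝ) := by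
        intro i
        have : ∑ j, (a' i j : ℝ) * x j
            = ∑ j, (a i.succ j : ℝ) * x j - (r i : ℝ) * ∑ j, (a 0 j : ℝ) * x j := by
          rw [Finset.mul_sum, ← Finset.sum_sub_distrib]
          refine Finset.sum_congr rfl fun j _ => ?_
          push_cast [ha']
          ring
        rw [this, hx, hx, hd']
        push_cast
        ring
      set C : ℝ := ∑ j ∈ Finset.univ.erase j₀, |(a 0 j : ℝ) / (a 0 j₀ : ℝ)| with hC
      have hC0 : 0 ≤ C := Finset.sum_nonneg fun j _ => abs_nonneg _
      have hδ : 0 < ε / (C + 1) := div_pos hε (by linarith)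
      obtain ⟨q, hq, hqc⟩ := ih a' d' x hx' (ε / (C + 1)) hδ
      set v : ℚ := (d 0 - ∑ j ∈ Finset.univ.erase j₀, a 0 j * q j) / a 0 j₀ with hv
      set q' : Fin n → ℚ := Function.update q j₀ v with hq'
      have hq'ne : ∀ j, j ≠ j₀ → q' j = q j := fun j h => Function.update_of_ne h _ _
      have hq'j₀ : q' j₀ = v := Function.update_self _ _ _
      -- rational versions of the equations satisfied by q
      have hqQ : ∀ i, ∑ j, a' i j * q j = d' i := by
        intro i
        have := hq i
        exact_mod_cast this
      -- equation 0 for q'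
      have heq0 : ∑ j, a 0 j * q' j = d 0 := by
        rw [← Finset.add_sum_erase _ _ (Finset.mem_univ j₀), hq'j₀, hv,
          mul_div_cancel₀ _ h0]
        have : ∑ j ∈ Finset.univ.erase j₀, a 0 j * q' j
            = ∑ j ∈ Finset.univ.erase j₀, a 0 j * q j :=
          Finset.sum_congr rfl fun j hjm => by
            rw [hq'ne j (Finset.ne_of_mem_erase hjm)]
        rw [this]; ring
      -- tail equations for q'
      have heqs : ∀ i : Fin k, ∑ j, a i.succ j * q' j = d i.succ := by
        intro i
        have hsplit : ∀ j, a i.succ j = a' i j + r i * a 0 j := by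
          intro j; rw [ha']; ring
        have ha'j₀ : a' i j₀ = 0 := by
          rw [ha', hr]; field_simp; ring
        have h1 : ∑ j, a' i j * q' j = ∑ j, a' i j * q j := by
          rw [← Finset.add_sum_erase _ (fun j => a' i j * q' j) (Finset.mem_univ j₀),
            ← Finset.add_sum_erase _ (fun j => a' i j * q j) (Finset.mem_univ j₀),
            ha'j₀]
          simp only [zero_mul]
          congr 1
          exact Finset.sum_congr rfl fun j hjm => by
            rw [hq'ne j (Finset.ne_of_mem_erase hjm)]
        calc ∑ j, a i.succ j * q' j
            = ∑ j, (a' i j * q' j + r i * (a 0 j * q' j)) := by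
              refine Finset.sum_congr rfl fun j _ => ?_
              rw [hsplit j]; ring
          _ = ∑ j, a' i j * q' j + r i * ∑ j, a 0 j * q' j := by
              rw [Finset.sum_add_distrib, Finset.mul_sum]
          _ = d' i + r i * d 0 := by rw [h1, hqQ, heq0]
          _ = d i.succ := by rw [hd']; ring
      refine ⟨q', fun i => ?_, fun j => ?_⟩
      · refine Fin.cases ?_ ?_ i
        · exact_mod_cast congrArg (fun t : ℚ => (t : ℝ)) heq0
        · intro i'
          exact_mod_cast congrArg (fun t : ℚ => (t : ℝ)) (heqs i')
      · by_cases hjj : j = j₀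
        · subst hjj
          -- compute the difference
          have hxj : x j = ((d 0 : ℝ) - ∑ i ∈ Finset.univ.erase j, (a 0 i : ℝ) * x i)
              / (a 0 j : ℝ) := by
            have h := hx 0
            rw [← Finset.add_sum_erase _ _ (Finset.mem_univ j)] at h
            rw [eq_div_iff h0R]
            linarith
          have hvR : ((q' j : ℝ))
              = ((d 0 : ℝ) - ∑ i ∈ Finset.univ.erase j, (a 0 i : ℝ) * (q i : ℝ))
                / (a 0 j : ℝ) := by
            rw [hq'j₀, hv]
            push_cast
            rfl
          have hdiff : (q' j : ℝ) - x j
              = ∑ i ∈ Finset.univ.erase j, ((a 0 i : ℝ) / (a 0 j : ℝ)) * (x i - (q i : ℝ)) := by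
            rw [hvR, hxj, div_sub_div_same]
            have hnum : ((d 0 : ℝ) - ∑ i ∈ Finset.univ.erase j, (a 0 i : ℝ) * (q i : ℝ))
                - ((d 0 : ℝ) - ∑ i ∈ Finset.univ.erase j, (a 0 i : ℝ) * x i)
                = ∑ i ∈ Finset.univ.erase j, (a 0 i : ℝ) * (x i - (q i : ℝ)) := by
              have : ∑ i ∈ Finset.univ.erase j, (a 0 i : ℝ) * (x i - (q i : ℝ))
                  = ∑ i ∈ Finset.univ.erase j,
                      ((a 0 i : ℝ) * x i - (a 0 i : ℝ) * (q i : ℝ)) :=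
                Finset.sum_congr rfl fun i _ => by ring
              rw [this, Finset.sum_sub_distrib]
              ring
            rw [hnum, Finset.sum_div]
            exact Finset.sum_congr rfl fun i _ => by ring
          have habs : |(q' j : ℝ) - x j| ≤ C * (ε / (C + 1)) := by
            rw [hdiff, hC, Finset.sum_mul]
            refine (Finset.abs_sum_le_sum_abs _ _).trans (Finset.sum_le_sum fun i hi => ?_)
            rw [abs_mul]
            refine mul_le_mul_of_nonneg_left ?_ (abs_nonneg _)
            rw [abs_sub_comm]
            exact (hqc i).le
          calc |(q' j : ℝ) - x j| ≤ C * (ε / (C + 1)) := habs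
            _ < ε := by
              rw [mul_div_assoc']
              rw [div_lt_iff₀ (by linarith)]
              nlinarith
        · rw [hq'ne j hjj]
          exact lt_of_lt_of_le (hqc j)
            (div_le_self hε.le (by linarith))
    · -- a 0 = 0 case
      push_neg at hj
      have hd0 : (d 0 : ℝ) = 0 := by
        rw [← hx 0]
        exact Finset.sum_eq_zero fun j _ => by rw [hj j]; simp
      obtain ⟨q, hq, hqc⟩ := ih (fun i => a i.succ) (fun i => d i.succ) x
        (fun i => hx i.succ) ε hε
      refine ⟨q, fun i => ?_, hqc⟩
      refine Fin.cases ?_ (fun i' => hq i') i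
      rw [hd0]
      refine Finset.sum_eq_zero fun j _ => ?_
      rw [hj j]; simp

/-- Let `λ₁, …, λ_m` be linear forms on `ℝ^n` with rational
coefficients (i.e. mapping `ℚ^n` into `ℚ`) and `c₁, …, c_m ∈ ℚ`.  Then the
convex set `C = {x : λᵢ(x) + cᵢ ≤ 0 for all i}` equals the topological closure
of its set of rational points `C ∩ ℚ^n`. -/
theorem stmt_4 (n m : ℕ) (L : Fin m → ((Fin n → ℝ) →ₗ[ℝ] ℝ))
    (hL : ∀ i : Fin m, ∀ q : Fin n → ℚ, ∃ r : ℚ, L i (fun j => (q j : ℝ)) = (r : ℝ))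
    (c : Fin m → ℚ) :
    {x : Fin n → ℝ | ∀ i : Fin m, L i x + (c i : ℝ) ≤ 0} =
      closure ({x : Fin n → ℝ | ∀ i : Fin m, L i x + (c i : ℝ) ≤ 0} ∩
        {x : Fin n → ℝ | ∀ j : Fin n, ∃ q : ℚ, x j = (q : ℝ)}) := by
  classical
  have hbasis : ∀ i j, ∃ r : ℚ, L i (Pi.single j (1:ℝ)) = (r : ℝ) := by
    intro i j
    obtain ⟨r, hr⟩ := hL i (Pi.single j (1:ℚ))
    refine ⟨r, ?_⟩
    have hcast : (fun k => ((Pi.single j (1:ℚ) : Fin n → ℚ) k : ℝ))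
        = Pi.single j (1:ℝ) := by
      funext k; by_cases h : k = j <;> simp [Pi.single_apply, h]
    rwa [hcast] at hr
  choose a ha using hbasis
  have hA : ∀ i (y : Fin n → ℝ), L i y = ∑ j, (a i j : ℝ) * y j := by
    intro i y
    conv_lhs => rw [pi_eq_sum_univ y]
    rw [map_sum]
    refine Finset.sum_congr rfl fun j _ => ?_
    rw [map_smul]
    have hfun : (fun k => if j = k then (1:ℝ) else 0) = Pi.single j (1:ℝ) := by
      funext k; simp [Pi.single_apply, eq_comm]
    rw [hfun, ha i j, smul_eq_mul, mul_comm]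
  have hcont : ∀ i, Continuous fun y : Fin n → ℝ => L i y + (c i : ℝ) :=
    fun i => ((L i).continuous_of_finiteDimensional).add continuous_const
  have hclosed : IsClosed {x : Fin n → ℝ | ∀ i, L i x + (c i : ℝ) ≤ 0} := by
    have hset : {x : Fin n → ℝ | ∀ i, L i x + (c i : ℝ) ≤ 0}
        = ⋂ i, {x : Fin n → ℝ | L i x + (c i : ℝ) ≤ 0} := by
      ext y; simp [Set.mem_iInter]
    rw [hset]
    exact isClosed_iInter fun i => isClosed_le (hcont i) continuous_const
  apply Set.Subset.antisymm
  · intro x hx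
    rw [Metric.mem_closure_iff]
    intro ε hε
    set U : Set (Fin n → ℝ) :=
      ⋂ i, {y | L i x + (c i : ℝ) < 0 → L i y + (c i : ℝ) < 0} with hU
    have hUopen : IsOpen U := by
      refine isOpen_iInter_of_finite fun i => ?_
      by_cases hs : L i x + (c i : ℝ) < 0
      · have : {y : Fin n → ℝ | L i x + (c i : ℝ) < 0 → L i y + (c i : ℝ) < 0}
            = {y | L i y + (c i : ℝ) < 0} := by ext y; simp [hs]
        rw [this]; exact isOpen_lt (hcont i) continuous_const
      · have : {y : Fin n → ℝ | L i x + (c i : ℝ) < 0 → L i y + (c i : ℝ) < 0}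
            = Set.univ := by ext y; simp [hs]
        rw [this]; exact isOpen_univ
    have hxU : x ∈ U := Set.mem_iInter.2 fun i h => h
    obtain ⟨δ, hδ0, hball⟩ := Metric.isOpen_iff.1 hUopen x hxU
    have hε' : 0 < min ε δ / 2 := by positivity
    set a' : Fin m → Fin n → ℚ :=
      fun i j => if L i x + (c i : ℝ) = 0 then a i j else 0 with ha'
    set d' : Fin m → ℚ := fun i => if L i x + (c i : ℝ) = 0 then -c i else 0 with hd'
    have hxe : ∀ i, ∑ j, (a' i j : ℝ) * x j = (d' i : ℝ) := by
      intro i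
      by_cases ht : L i x + (c i : ℝ) = 0
      · simp only [ha', hd', if_pos ht]
        push_cast
        rw [← hA i x]
        linarith
      · simp [ha', hd', ht]
    obtain ⟨q, hqe, hqc⟩ := rat_sol_dense n m a' d' x hxe (min ε δ / 2) hε'
    set y : Fin n → ℝ := fun j => (q j : ℝ) with hy
    have hdist : dist x y < min ε δ / 2 := by
      rw [dist_pi_lt_iff hε']
      intro j
      rw [Real.dist_eq, abs_sub_comm]
      exact hqc j
    have hyU : y ∈ U := by
      apply hball
      rw [Metric.mem_ball, dist_comm]
      calc dist x y < min ε δ / 2 := hdist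
        _ ≤ δ / 2 := by gcongr; exact min_le_right _ _
        _ < δ := by linarith
    refine ⟨y, ⟨fun i => ?_, fun j => ⟨q j, rfl⟩⟩, ?_⟩
    · by_cases ht : L i x + (c i : ℝ) = 0
      · have h1 := hqe i
        simp only [ha', hd', if_pos ht] at h1
        push_cast at h1
        rw [hA i y]
        have : ∑ j, (a i j : ℝ) * y j = ∑ j, (a i j : ℝ) * (q j : ℝ) := rfl
        rw [this]
        linarith
      · have hs : L i x + (c i : ℝ) < 0 := lt_of_le_of_ne (hx i) ht
        exact (Set.mem_iInter.1 hyU i hs).le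
    · calc dist x y < min ε δ / 2 := hdist
        _ ≤ ε / 2 := by gcongr; exact min_le_left _ _
        _ < ε := by linarith
  · exact closure_minimal Set.inter_subset_left hclosed
end

section
/- For every integer n ≥ 1 there exists an integer e(n) ≥ 1 such that: for every short exact sequence of finite groups 1 → N → G →^π H → 1 with |N| ≤ n and H abelian, there exists an abelian subgroup H'' ≤ G such that for every h ∈ H, the element h^{e(n)} belongs to π(H''). -/
/-- Auxiliary: if `a*b = z*(b*a)` with `z` commuting with `a` and `b`, then
`a * b^j = z^j * (b^j * a)`. -/
lemma aux_pow_right {G : Type*} [Group G] (a b z : G) (hz : a * b = z * (b * a))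
    (hzb : Commute z b) : ∀ j : ℕ, a * b ^ j = z ^ j * (b ^ j * a) := by
  intro j
  induction j with
  | zero => simp
  | succ j ih =>
    have hstep : a * b ^ (j + 1) = (a * b) * b ^ j := by rw [pow_succ']; group
    rw [hstep, hz]
    calc z * (b * a) * b ^ j = z * (b * (a * b ^ j)) := by group
      _ = z * (b * (z ^ j * (b ^ j * a))) := by rw [ih]
      _ = z * ((b * z ^ j) * (b ^ j * a)) := by group
      _ = z * ((z ^ j * b) * (b ^ j * a)) := by rw [← (hzb.pow_left j).eq]
      _ = z ^ (j + 1) * (b ^ (j + 1) * a) := by rw [pow_succ' z, pow_succ' b]; group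

/-- Auxiliary: powers of elements with central commutator of vanishing power commute. -/
lemma aux_pow_comm {G : Type*} [Group G] (a b z : G) (k : ℕ) (hz : a * b = z * (b * a))
    (hza : Commute z a) (hzb : Commute z b) (hzk : z ^ (k * k) = 1) :
    a ^ k * b ^ k = b ^ k * a ^ k := by
  have key : ∀ i : ℕ, a ^ i * b ^ k = z ^ (i * k) * (b ^ k * a ^ i) := by
    intro i
    induction i with
    | zero => simp
    | succ i ih =>
      have hzik : z ^ ((i + 1) * k) = z ^ (i * k) * z ^ k := by
        rw [← pow_add]
        congr 1
        ring
      have hpow : a ^ (i + 1) = a * a ^ i := pow_succ' a i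
      rw [hpow, hzik]
      calc a * a ^ i * b ^ k = a * (a ^ i * b ^ k) := by group
        _ = a * (z ^ (i * k) * (b ^ k * a ^ i)) := by rw [ih]
        _ = (a * z ^ (i * k)) * (b ^ k * a ^ i) := by group
        _ = (z ^ (i * k) * a) * (b ^ k * a ^ i) := by rw [← (hza.pow_left (i * k)).eq]
        _ = z ^ (i * k) * ((a * b ^ k) * a ^ i) := by group
        _ = z ^ (i * k) * ((z ^ k * (b ^ k * a)) * a ^ i) := by
            rw [aux_pow_right a b z hz hzb k]
        _ = z ^ (i * k) * z ^ k * (b ^ k * (a * a ^ i)) := by group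
  rw [key k, hzk, one_mul]

/-- For every integer `n ≥ 1` there exists `e(n) ≥ 1` such
that for every short exact sequence of finite groups `1 → N → G →^π H → 1`
(encoded as a surjective homomorphism `π : G → H` of finite groups with
kernel `N = ker π`) with `|N| ≤ n` and `H` abelian, there exists an abelian
subgroup `H'' ≤ G` such that `h^{e(n)} ∈ π(H'')` for every `h ∈ H`. -/
theorem stmt_5 : ∀ n : ℕ, 1 ≤ n → ∃ e : ℕ, 1 ≤ e ∧
    ∀ (G H : Type) [Group G] [Group H] [Finite G] [Finite H] (π : G →* H),
      Function.Surjective π → Nat.card π.ker ≤ n →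
      (∀ a b : H, a * b = b * a) →
      ∃ H'' : Subgroup G, (∀ a ∈ H'', ∀ b ∈ H'', a * b = b * a) ∧
        ∀ h : H, h ^ e ∈ H''.map π := by
  intro n hn
  set k := n.factorial with hk
  refine ⟨k * k, Nat.one_le_iff_ne_zero.mpr (by positivity), ?_⟩
  intro G H _ _ _ _ π hsurj hcard hcomm
  letI : CommGroup H := { ‹Group H› with mul_comm := hcomm }
  set N : Subgroup G := π.ker with hN
  set C : Subgroup G := Subgroup.centralizer (N : Set G) with hC
  -- order of any element of N kills `k = n!`
  have hNk : ∀ z ∈ N, z ^ k = 1 := by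
    intro z hz
    have h1 : (⟨z, hz⟩ : N) ^ Nat.card N = 1 := pow_card_eq_one'
    have h2 : z ^ Nat.card N = 1 := by
      have h2' : ((⟨z, hz⟩ : N) : G) ^ Nat.card N = ((1 : N) : G) := by
        rw [← SubgroupClass.coe_pow, h1]
      simpa using h2'
    have hdvd : Nat.card N ∣ k := Nat.dvd_factorial Nat.card_pos hcard
    obtain ⟨t, ht⟩ := hdvd
    rw [hk] at ht ⊢
    rw [ht, pow_mul, h2, one_pow]
  -- elements of the set of k-th powers of C commute pairwise
  set T : Set G := (fun x => x ^ k) '' (C : Set G) with hT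
  have hTcomm : ∀ x ∈ T, ∀ y ∈ T, x * y = y * x := by
    rintro _ ⟨a, ha, rfl⟩ _ ⟨b, hb, rfl⟩
    have haC : a ∈ C := ha
    have hbC : b ∈ C := hb
    set z : G := a * b * a⁻¹ * b⁻¹ with hzdef
    have hzN : z ∈ N := by
      have : π z = 1 := by
        simp only [hzdef, map_mul, map_inv]
        rw [mul_comm (π a) (π b)]
        group
      exact this
    have hza : Commute z a := (Subgroup.mem_centralizer_iff.mp haC) z hzN
    have hzb : Commute z b := (Subgroup.mem_centralizer_iff.mp hbC) z hzN
    have hzeq : a * b = z * (b * a) := by rw [hzdef]; group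
    have hzk : z ^ (k * k) = 1 := by
      rw [pow_mul, hNk z hzN, one_pow]
    exact aux_pow_comm a b z k hzeq hza hzb hzk
  refine ⟨Subgroup.closure T, ?_, ?_⟩
  · -- the closure of a commuting set is commutative
    intro x hx y hy
    have h1 := Subgroup.closure_le_centralizer_centralizer T hx
    have h2 := Subgroup.closure_le_centralizer_centralizer T hy
    exact Set.centralizer_centralizer_comm_of_comm hTcomm x h1 y h2
  · -- every `h ^ (k * k)` lies in the image
    intro h
    -- index of `C.map π` divides `k`
    have hCindex : C.index ∣ k := by
      have hkerC : (MulAut.conjNormal (H := N)).ker = C := by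
        ext x
        simp only [MonoidHom.mem_ker, hC, Subgroup.mem_centralizer_iff]
        constructor
        · intro hx g hg
          have key := congrArg (fun (f : MulAut N) => ((f ⟨g, hg⟩ : N) : G)) hx
          simp only [MulAut.conjNormal_apply, MulAut.one_apply] at key
          calc g * x = (x * g * x⁻¹) * x := by rw [key]
            _ = x * g := by group
        · intro hx
          refine MulEquiv.ext fun g => Subtype.ext ?_
          simp only [MulAut.conjNormal_apply, MulAut.one_apply]
          have key := hx (g : G) g.2
          calc x * (g : G) * x⁻¹ = (g * x) * x⁻¹ := by rw [key]
            _ = g := by group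
      have h1 : C.index = Nat.card (MulAut.conjNormal (H := N)).range := by
        rw [← hkerC, Subgroup.index_ker]
      have h2 : Nat.card (MulAut.conjNormal (H := N)).range ∣ Nat.card (MulAut N) :=
        Subgroup.card_subgroup_dvd_card _
      have h3 : Nat.card (MulAut N) ∣ Nat.card (Equiv.Perm N) := by
        have hinj : Function.Injective (MulAut.toPerm (M := N)) := fun f g hfg => by
          ext x
          exact congrArg Subtype.val (congrArg (fun (e : Equiv.Perm N) => e x) hfg)
        have hdvd := Subgroup.card_subgroup_dvd_card (MulAut.toPerm (M := N)).range
        have hcardeq : Nat.card (MulAut N) = Nat.card (MulAut.toPerm (M := N)).range :=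
          Nat.card_congr (MonoidHom.ofInjective hinj).toEquiv
        rwa [← hcardeq] at hdvd
      have h4 : Nat.card (Equiv.Perm N) = (Nat.card N).factorial := by
        have : Fintype N := Fintype.ofFinite N
        have : DecidableEq N := Classical.decEq _
        rw [Nat.card_eq_fintype_card (α := Equiv.Perm N), Fintype.card_perm,
          Nat.card_eq_fintype_card]
      have h5 : (Nat.card N).factorial ∣ k := Nat.factorial_dvd_factorial hcard
      rw [h1]
      exact dvd_trans h2 (dvd_trans h3 (h4 ▸ h5))
    have hmapindex : (C.map π).index ∣ k := by
      have h1 : (C.map π).index = (C ⊔ π.ker).index * π.range.index := Subgroup.index_map C π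
      have h2 : π.range.index = 1 := by
        rw [MonoidHom.range_eq_top.mpr hsurj, Subgroup.index_top]
      rw [h1, h2, mul_one]
      exact dvd_trans (Subgroup.index_dvd_of_le le_sup_left) hCindex
    -- hence `h ^ k ∈ C.map π`
    have hhk : h ^ k ∈ C.map π := by
      obtain ⟨t, ht⟩ := hmapindex
      rw [ht, pow_mul]
      exact Subgroup.pow_mem _ (Subgroup.pow_index_mem (C.map π) h) t
    obtain ⟨c, hcC, hc⟩ := hhk
    refine ⟨c ^ k, Subgroup.subset_closure ⟨c, hcC, rfl⟩, ?_⟩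
    rw [map_pow, hc, ← pow_mul]
end

section
/- For every integer n ≥ 1 there exists an integer e(n) ≥ 1 such that: for every short exact sequence of finite groups 1 → N → G →^π H → 1 with |N| ≤ n, with H abelian and generated by k elements, there exists an abelian subgroup H'' ≤ G whose image satisfies [H : π(H'')] ≤ e(n)^k. -/
private lemma pow_val_add' {Q : Type*} [Group Q] {q : Q} {e : ℕ} [NeZero e]
    (hq : q ^ e = 1) (a b : ZMod e) :
    q ^ (a + b).val = q ^ a.val * q ^ b.val := by
  rw [ZMod.val_add, ← pow_eq_pow_mod _ hq, pow_add]

private lemma pow_val_neg' {Q : Type*} [Group Q] {q : Q} {e : ℕ} [NeZero e]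
    (hq : q ^ e = 1) (a : ZMod e) :
    q ^ (-a).val = (q ^ a.val)⁻¹ := by
  rw [eq_inv_iff_mul_eq_one, ← pow_add, pow_eq_pow_mod _ hq, ← ZMod.val_add,
    neg_add_cancel, ZMod.val_zero, pow_zero]

/-- For every integer `n ≥ 1` there exists `e(n) ≥ 1` such
that for every short exact sequence of finite groups `1 → N → G →^π H → 1`
(encoded as a surjective homomorphism `π : G → H` of finite groups with
kernel `N = ker π`) with `|N| ≤ n`, `H` abelian and generated by `k`
elements, there exists an abelian subgroup `H'' ≤ G` with
`[H : π(H'')] ≤ e(n)^k`. -/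
theorem stmt_6 : ∀ n : ℕ, 1 ≤ n → ∃ e : ℕ, 1 ≤ e ∧
    ∀ (G H : Type) [Group G] [Group H] [Finite G] [Finite H] (π : G →* H)
      (k : ℕ) (T : Finset H),
      Function.Surjective π → Nat.card π.ker ≤ n →
      (∀ a b : H, a * b = b * a) →
      T.card ≤ k → Subgroup.closure (T : Set H) = ⊤ →
      ∃ H'' : Subgroup G, (∀ a ∈ H'', ∀ b ∈ H'', a * b = b * a) ∧
        (H''.map π).index ≤ e ^ k := by
  intro n hn
  refine ⟨(n.factorial) ^ 2, Nat.one_le_pow _ _ n.factorial_pos, ?_⟩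
  intro G H _ _ _ _ π k T hsurj hker hcomm hTk hTgen
  classical
  set m := n.factorial with hm
  have hm1 : 1 ≤ m := n.factorial_pos
  -- kernel elements have order dividing m
  have hkerpow : ∀ x ∈ π.ker, x ^ m = 1 := by
    intro x hx
    have h1 : orderOf (⟨x, hx⟩ : π.ker) ∣ Nat.card π.ker := orderOf_dvd_natCard _
    have h2 : Nat.card π.ker ∣ m := Nat.dvd_factorial Nat.card_pos hker
    have h3 : (⟨x, hx⟩ : π.ker) ^ m = 1 := orderOf_dvd_iff_pow_eq_one.mp (h1.trans h2)
    simpa using Subtype.ext_iff.mp h3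
  -- m-th powers commute with the kernel
  have hconj : ∀ (g : G), ∀ x ∈ π.ker, Commute (g ^ m) x := by
    intro g x hx
    have hinj : Function.Injective (MulAut.toPerm (M := π.ker)) := by
      intro a b h
      ext z
      exact congrArg Subtype.val (Equiv.ext_iff.mp h z)
    have hd1 : Nat.card (MulAut π.ker) ∣ Nat.card (Equiv.Perm π.ker) :=
      Subgroup.card_dvd_of_injective _ hinj
    have : Fintype π.ker := Fintype.ofFinite _
    have hd2 : Nat.card (Equiv.Perm π.ker) = (Nat.card π.ker).factorial := by
      rw [Nat.card_eq_fintype_card, Nat.card_eq_fintype_card, Fintype.card_perm]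
    have hd3 : Nat.card (MulAut π.ker) ∣ m := by
      refine hd1.trans ?_
      rw [hd2]
      exact Nat.factorial_dvd_factorial hker
    have h4 : (MulAut.conjNormal (H := π.ker) g) ^ m = 1 :=
      orderOf_dvd_iff_pow_eq_one.mp ((orderOf_dvd_natCard _).trans hd3)
    have h5 : MulAut.conjNormal (H := π.ker) (g ^ m) (⟨x, hx⟩ : π.ker) = ⟨x, hx⟩ := by
      rw [map_pow, h4]; rfl
    have h6 : g ^ m * x * (g ^ m)⁻¹ = x := by
      simpa only [MulAut.conjNormal_apply] using congrArg Subtype.val h5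
    show g ^ m * x = x * (g ^ m)
    conv_rhs => rw [← h6]
    group
  -- key commuting lemma
  have key : ∀ x y : G, Commute (x ^ m ^ 2) (y ^ m ^ 2) := by
    intro x y
    set a := x ^ m with ha
    set b := y ^ m with hb
    set c := a * b * a⁻¹ * b⁻¹ with hc
    have hcker : c ∈ π.ker := by
      have h := hcomm (π a) (π b)
      simp only [MonoidHom.mem_ker, hc, map_mul, map_inv]
      rw [h]; group
    have hcm : c ^ m = 1 := hkerpow c hcker
    have hab : a * b = c * (b * a) := by rw [hc]; group
    have hstep : ∀ j : ℕ, a ^ j * b = c ^ j * (b * a ^ j) := by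
      intro j
      induction j with
      | zero => simp
      | succ j ih =>
        have hacj : a * c ^ j = c ^ j * a := (hconj x (c ^ j) (pow_mem hcker j)).eq
        calc a ^ (j + 1) * b = a * (a ^ j * b) := by rw [pow_succ']; rw [mul_assoc]
          _ = a * (c ^ j * (b * a ^ j)) := by rw [ih]
          _ = (a * c ^ j) * (b * a ^ j) := by rw [mul_assoc]
          _ = (c ^ j * a) * (b * a ^ j) := by rw [hacj]
          _ = c ^ j * ((a * b) * a ^ j) := by rw [mul_assoc, mul_assoc]
          _ = c ^ j * ((c * (b * a)) * a ^ j) := by rw [hab]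
          _ = c ^ (j + 1) * (b * a ^ (j + 1)) := by rw [pow_succ, pow_succ]; group
    have habm : Commute (a ^ m) b := by
      have h := hstep m
      rw [hcm, one_mul] at h
      exact h
    have h2 : Commute (a ^ m) (b ^ m) := habm.pow_right m
    simpa [ha, hb, pow_two, pow_mul] using h2
  set e : ℕ := m ^ 2 with he
  have he1 : 1 ≤ e := Nat.one_le_pow _ _ hm1
  haveI : NeZero e := ⟨by omega⟩
  set Sset : Set G := Set.range (fun g : G => g ^ e) with hSset
  refine ⟨Subgroup.closure Sset, ?_, ?_⟩
  · -- abelian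
    intro p hp q hq
    refine Subgroup.closure_induction₂ (p := fun x y _ _ => x * y = y * x)
      ?_ ?_ ?_ ?_ ?_ ?_ ?_ hp hq
    · rintro x y ⟨u, rfl⟩ ⟨v, rfl⟩
      exact (key u v).eq
    · intro x _; simp
    · intro x _; simp
    · intro x y z _ _ _ h1 h2
      exact Commute.mul_left (a := x) (b := y) (c := z) h1 h2
    · intro y z x _ _ _ h1 h2
      exact Commute.mul_right (a := x) (b := y) (c := z) h1 h2
    · intro x y _ _ h
      exact Commute.inv_left (a := x) (b := y) h
    · intro x y _ _ h
      exact Commute.inv_right (a := x) (b := y) h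
  · -- index bound
    set S : Subgroup H := (Subgroup.closure Sset).map π with hS
    haveI hSnormal : S.Normal := by
      refine ⟨fun a ha g => ?_⟩
      have hg : g * a * g⁻¹ = a := by
        rw [hcomm g a, mul_assoc, mul_inv_cancel, mul_one]
      rw [hg]; exact ha
    have hpowS : ∀ h : H, h ^ e ∈ S := by
      intro h
      obtain ⟨g, rfl⟩ := hsurj h
      exact ⟨g ^ e, Subgroup.subset_closure ⟨g, rfl⟩, by rw [map_pow]⟩
    set φ : H →* H ⧸ S := QuotientGroup.mk' S with hφ
    have hφsurj : Function.Surjective φ := QuotientGroup.mk'_surjective S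
    have hQcomm : ∀ p q : H ⧸ S, p * q = q * p := by
      intro p q
      obtain ⟨a, rfl⟩ := hφsurj p
      obtain ⟨b, rfl⟩ := hφsurj q
      rw [← map_mul, ← map_mul, hcomm]
    letI : CommGroup (H ⧸ S) := { (inferInstance : Group (H ⧸ S)) with mul_comm := hQcomm }
    have hφe : ∀ h : H, (φ h) ^ e = 1 := by
      intro h
      rw [← map_pow]
      exact (QuotientGroup.eq_one_iff _).mpr (hpowS h)
    let ψ : ({ x // x ∈ T } → ZMod e) → H ⧸ S :=
      fun v => ∏ t : { x // x ∈ T }, φ (t : H) ^ (v t).val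
    have hψmul : ∀ v w, ψ (v + w) = ψ v * ψ w := by
      intro v w
      show (∏ t : { x // x ∈ T }, φ (t : H) ^ ((v + w) t).val)
          = (∏ t : { x // x ∈ T }, φ (t : H) ^ (v t).val)
            * ∏ t : { x // x ∈ T }, φ (t : H) ^ (w t).val
      rw [← Finset.prod_mul_distrib]
      exact Finset.prod_congr rfl fun t _ => pow_val_add' (hφe t) (v t) (w t)
    have hψinv : ∀ v, ψ (-v) = (ψ v)⁻¹ := by
      intro v
      show (∏ t : { x // x ∈ T }, φ (t : H) ^ ((-v) t).val)
          = (∏ t : { x // x ∈ T }, φ (t : H) ^ (v t).val)⁻¹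
      rw [← Finset.prod_inv_distrib]
      exact Finset.prod_congr rfl fun t _ => pow_val_neg' (hφe t) (v t)
    have hψsurj : Function.Surjective ψ := by
      have hone : (1 : H ⧸ S) ∈ Set.range ψ := by
        refine ⟨0, ?_⟩
        show (∏ t : { x // x ∈ T }, φ (t : H) ^ ((0 : { x // x ∈ T } → ZMod e) t).val) = 1
        simp
      have hmulmem : ∀ x y : H ⧸ S, x ∈ Set.range ψ → y ∈ Set.range ψ →
          x * y ∈ Set.range ψ := by
        rintro x y ⟨v, rfl⟩ ⟨w, rfl⟩
        exact ⟨v + w, hψmul v w⟩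
      have hinvmem : ∀ x : H ⧸ S, x ∈ Set.range ψ → x⁻¹ ∈ Set.range ψ := by
        rintro x ⟨v, rfl⟩
        exact ⟨-v, hψinv v⟩
      set R : Subgroup (H ⧸ S) :=
        { carrier := Set.range ψ
          one_mem' := hone
          mul_mem' := fun hx hy => hmulmem _ _ hx hy
          inv_mem' := fun hx => hinvmem _ hx } with hR
      have hgen : ∀ t ∈ T, φ t ∈ R := by
        intro t ht
        refine ⟨fun s => if s = ⟨t, ht⟩ then 1 else 0, ?_⟩
        have h1 : ∀ s : { x // x ∈ T }, s ≠ ⟨t, ht⟩ →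
            φ (s : H) ^ (((if s = ⟨t, ht⟩ then 1 else 0) : ZMod e)).val = 1 := by
          intro s hs
          simp [hs]
        show (∏ s : { x // x ∈ T },
            φ (s : H) ^ (((if s = ⟨t, ht⟩ then 1 else 0) : ZMod e)).val) = φ t
        rw [Fintype.prod_eq_single (⟨t, ht⟩ : { x // x ∈ T }) h1, if_pos rfl,
          ZMod.val_one_eq_one_mod, ← pow_eq_pow_mod _ (hφe t), pow_one]
      have hcl : Subgroup.closure (φ '' (T : Set H)) = ⊤ := by
        rw [← MonoidHom.map_closure, hTgen, Subgroup.map_top_of_surjective _ hφsurj]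
      intro q
      have hq : q ∈ Subgroup.closure (φ '' (T : Set H)) := by
        rw [hcl]; exact Subgroup.mem_top q
      have hle : Subgroup.closure (φ '' (T : Set H)) ≤ R := by
        refine Subgroup.closure_le R |>.mpr ?_
        rintro x ⟨t, ht, rfl⟩
        exact hgen t ht
      exact hle hq
    have hcard : Nat.card (H ⧸ S) ≤ e ^ T.card := by
      calc Nat.card (H ⧸ S) ≤ Nat.card ({ x // x ∈ T } → ZMod e) :=
            Nat.card_le_card_of_surjective ψ hψsurj
        _ = Nat.card (ZMod e) ^ Nat.card { x // x ∈ T } := Nat.card_fun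
        _ = e ^ T.card := by rw [Nat.card_zmod, Nat.card_eq_fintype_card, Fintype.card_coe]
    calc S.index = Nat.card (H ⧸ S) := Subgroup.index_eq_card S
      _ ≤ e ^ T.card := hcard
      _ ≤ e ^ k := Nat.pow_le_pow_right (by omega) hTk
end

section
/- Let φ : U → U' be a continuous surjective group homomorphism of profinite groups, and let p be a prime number. Then every topologically p-nilpotent element u' ∈ U' is of the form u' = φ(u) for some topologically p-nilpotent element u ∈ U. -/
open Filter Topology

private lemma aux_pow_index_mem {G : Type*} [Group G] {p : ℕ} (hp : p.Prime)
    {N M : Subgroup G} [M.Normal] [M.FiniteIndex] (hNM : N ≤ M)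
    {u : G} {k : ℕ} (hu : u ^ p ^ k ∈ N) : u ^ p ^ M.index ∈ M := by
  set q : G ⧸ M := QuotientGroup.mk u with hq
  have h1 : q ^ p ^ k = 1 := by
    rw [hq, ← QuotientGroup.mk_pow, QuotientGroup.eq_one_iff]
    exact hNM hu
  obtain ⟨a, ha, hqa⟩ := (Nat.dvd_prime_pow hp).1 (orderOf_dvd_of_pow_eq_one h1)
  have hcard : orderOf q ∣ M.index := by
    simpa [Subgroup.index] using orderOf_dvd_natCard q
  have hpos : 0 < M.index := Nat.pos_of_ne_zero Subgroup.FiniteIndex.index_ne_zero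
  have hle : a ≤ M.index :=
    le_trans (Nat.lt_pow_self (n := a) hp.one_lt).le (hqa ▸ Nat.le_of_dvd hpos hcard)
  have h2 : q ^ p ^ M.index = 1 :=
    orderOf_dvd_iff_pow_eq_one.1 (hqa ▸ pow_dvd_pow p hle)
  rwa [hq, ← QuotientGroup.mk_pow, QuotientGroup.eq_one_iff] at h2

private lemma aux_exists_ons {G : Type*} [Group G] [TopologicalSpace G] [IsTopologicalGroup G]
    [CompactSpace G] [T2Space G] [TotallyDisconnectedSpace G] {W : Set G} (hW : W ∈ 𝓝 (1 : G)) :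
    ∃ N : OpenNormalSubgroup G, (N : Set G) ⊆ W := by
  obtain ⟨s, ⟨h1s, hs⟩, hsW⟩ := (nhds_basis_clopen (1 : G)).mem_iff.1 hW
  obtain ⟨N, hN⟩ := IsTopologicalGroup.exist_openNormalSubgroup_sub_clopen_nhds_of_one hs h1s
  exact ⟨N, hN.trans hsW⟩

private instance aux_fi {G : Type*} [Group G] [TopologicalSpace G] [IsTopologicalGroup G]
    [CompactSpace G] (N : OpenNormalSubgroup G) : N.toSubgroup.FiniteIndex :=
  haveI : Finite (G ⧸ N.toSubgroup) :=
    Subgroup.quotient_finite_of_isOpen N.toSubgroup N.toOpenSubgroup.isOpen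
  N.toSubgroup.finiteIndex_of_finite_quotient

/-- Let `φ : U → U'` be a continuous surjective homomorphism
of profinite groups (compact Hausdorff totally disconnected topological
groups), and `p` a prime.  Every topologically `p`-nilpotent element
`u' ∈ U'` (i.e. `u'^{p^n} → 1`) is the image `φ(u)` of a topologically
`p`-nilpotent element `u ∈ U`. -/
theorem stmt_7 {U U' : Type*}
    [Group U] [TopologicalSpace U] [IsTopologicalGroup U]
    [CompactSpace U] [T2Space U] [TotallyDisconnectedSpace U]
    [Group U'] [TopologicalSpace U'] [IsTopologicalGroup U']
    [CompactSpace U'] [T2Space U'] [TotallyDisconnectedSpace U']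
    (φ : U →* U') (hφc : Continuous φ) (hφs : Function.Surjective φ)
    (p : ℕ) (hp : p.Prime) (u' : U')
    (hu' : Filter.Tendsto (fun n : ℕ => u' ^ (p ^ n)) Filter.atTop (nhds 1)) :
    ∃ u : U,
      Filter.Tendsto (fun n : ℕ => u ^ (p ^ n)) Filter.atTop (nhds 1) ∧ φ u = u' := by
  classical
  set F : OpenNormalSubgroup U × OpenNormalSubgroup U' → Set U := fun t =>
    ((fun u : U => u ^ p ^ t.1.toSubgroup.index) ⁻¹' (t.1 : Set U)) ∩
      ((fun u : U => φ u * u'⁻¹) ⁻¹' ((t.2 : Set U'))) with hF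
  -- monotonicity
  have hmono : ∀ (N M : OpenNormalSubgroup U) (N' M' : OpenNormalSubgroup U'),
      N ≤ M → N' ≤ M' → F (N, N') ⊆ F (M, M') := by
    rintro N M N' M' h1 h2 u ⟨hu1, hu2⟩
    exact ⟨aux_pow_index_mem hp h1 hu1, h2 hu2⟩
  -- nonemptiness
  have hne : ∀ t, (F t).Nonempty := by
    rintro ⟨N, N'⟩
    set C : OpenNormalSubgroup U :=
      ⟨⟨N'.toSubgroup.comap φ, (N'.toOpenSubgroup.isOpen).preimage hφc⟩,
        Subgroup.Normal.comap N'.isNormal' φ⟩ with hC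
    set M : OpenNormalSubgroup U := N ⊓ C with hM
    have hMN : M.toSubgroup ≤ N.toSubgroup := inf_le_left (b := C.toSubgroup)
    have hMC : M.toSubgroup ≤ N'.toSubgroup.comap φ := inf_le_right (a := N.toSubgroup)
    haveI : Finite (U ⧸ M.toSubgroup) :=
      Subgroup.quotient_finite_of_isOpen M.toSubgroup M.toOpenSubgroup.isOpen
    haveI : Finite (U' ⧸ N'.toSubgroup) :=
      Subgroup.quotient_finite_of_isOpen N'.toSubgroup N'.toOpenSubgroup.isOpen
    obtain ⟨v, hv⟩ := hφs u'
    set q : U ⧸ M.toSubgroup := QuotientGroup.mk v with hqdef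
    set m : ℕ := orderOf q with hmdef
    have hm0 : m ≠ 0 := (orderOf_pos q).ne'
    set s : ℕ := m.factorization p with hsdef
    set t : ℕ := m / p ^ s with htdef
    have hmst : p ^ s * t = m := Nat.ordProj_mul_ordCompl_eq_self m p
    have hco : Nat.Coprime (p ^ s) t :=
      Nat.Coprime.pow_left s (Nat.coprime_ordCompl hp hm0)
    obtain ⟨a, ha1, ha0⟩ := Nat.chineseRemainder hco 1 0
    have key1 : (v ^ a) ^ p ^ M.toSubgroup.index ∈ M.toSubgroup := by
      rw [← pow_mul]
      have hts : t ∣ a := Nat.modEq_zero_iff_dvd.1 ha0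
      have hsle : s ≤ M.toSubgroup.index := by
        have h1 : p ^ s ∣ M.toSubgroup.index :=
          dvd_trans (Nat.ordProj_dvd m p)
            (by simpa [Subgroup.index] using orderOf_dvd_natCard q)
        have h2 : M.toSubgroup.index ≠ 0 := Subgroup.FiniteIndex.index_ne_zero
        exact le_trans (Nat.lt_pow_self (n := s) hp.one_lt).le
          (Nat.le_of_dvd (Nat.pos_of_ne_zero h2) h1)
      have hdvd : m ∣ a * p ^ M.toSubgroup.index := by
        calc m = t * p ^ s := by rw [mul_comm, hmst]
        _ ∣ a * p ^ M.toSubgroup.index := mul_dvd_mul hts (pow_dvd_pow p hsle)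
      have h3 : q ^ (a * p ^ M.toSubgroup.index) = 1 :=
        orderOf_dvd_iff_pow_eq_one.1 hdvd
      rwa [hqdef, ← QuotientGroup.mk_pow, QuotientGroup.eq_one_iff] at h3
    refine ⟨v ^ a, aux_pow_index_mem hp hMN key1, ?_⟩
    -- second condition
    show φ (v ^ a) * u'⁻¹ ∈ N'.toSubgroup
    have hφva : φ (v ^ a) = u' ^ a := by rw [map_pow, hv]
    set q' : U' ⧸ N'.toSubgroup := QuotientGroup.mk u' with hq'def
    have hq'p : ∃ r, orderOf q' = p ^ r := by
      have hnhd : (N'.toSubgroup : Set U') ∈ 𝓝 (1 : U') :=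
        N'.toOpenSubgroup.isOpen.mem_nhds N'.toSubgroup.one_mem
      obtain ⟨n, hn⟩ := (hu'.eventually_mem hnhd).exists
      have h1 : q' ^ p ^ n = 1 := by
        rw [hq'def, ← QuotientGroup.mk_pow, QuotientGroup.eq_one_iff]
        exact hn
      obtain ⟨r, _, hr⟩ := (Nat.dvd_prime_pow hp).1 (orderOf_dvd_of_pow_eq_one h1)
      exact ⟨r, hr⟩
    obtain ⟨r, hr⟩ := hq'p
    have hdvd_m : orderOf q' ∣ m := by
      have hψq : QuotientGroup.map M.toSubgroup N'.toSubgroup φ hMC q = q' := by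
        rw [hqdef, hq'def, QuotientGroup.map_mk, hv]
      have h1 : q' ^ m = 1 := by
        rw [← hψq, ← map_pow, hmdef, pow_orderOf_eq_one, map_one]
      exact orderOf_dvd_of_pow_eq_one h1
    have hrs : p ^ r ∣ p ^ s := by
      have h1 : p ^ r ∣ p ^ s * t := by rw [hmst, ← hr]; exact hdvd_m
      exact (Nat.Coprime.dvd_of_dvd_mul_right
        (Nat.Coprime.pow_left r (Nat.coprime_ordCompl hp hm0)) h1)
    have hmod : a ≡ 1 [MOD orderOf q'] := by
      rw [hr]; exact (ha1.of_dvd hrs)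
    have hpow : q' ^ a = q' := by
      calc q' ^ a = q' ^ 1 := pow_eq_pow_iff_modEq.2 hmod
      _ = q' := pow_one q'
    have hone : ((φ (v ^ a) * u'⁻¹ : U') : U' ⧸ N'.toSubgroup) = 1 := by
      rw [hφva]
      have h2 : ((u' ^ a * u'⁻¹ : U') : U' ⧸ N'.toSubgroup) = q' ^ a * q'⁻¹ := by
        rw [hq'def]
        rfl
      rw [h2, hpow, mul_inv_cancel]
    exact (QuotientGroup.eq_one_iff _).1 hone
  -- directedness
  have hdir : Directed (· ⊇ ·) F := by
    rintro ⟨N₁, N₁'⟩ ⟨N₂, N₂'⟩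
    exact ⟨(N₁ ⊓ N₂, N₁' ⊓ N₂'),
      hmono _ _ _ _ inf_le_left inf_le_left,
      hmono _ _ _ _ inf_le_right inf_le_right⟩
  -- closedness and compactness
  have hcl : ∀ t, IsClosed (F t) := by
    rintro ⟨N, N'⟩
    exact ((N.toOpenSubgroup.isClosed).preimage (continuous_pow _)).inter
      ((N'.toOpenSubgroup.isClosed).preimage (hφc.mul continuous_const))
  have hcpt : ∀ t, IsCompact (F t) := fun t => (hcl t).isCompact
  haveI : Nonempty (OpenNormalSubgroup U × OpenNormalSubgroup U') :=
    ⟨⟨⟨⊤, inferInstanceAs (⊤ : Subgroup _).Normal⟩, ⟨⊤, inferInstanceAs (⊤ : Subgroup _).Normal⟩⟩⟩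
  obtain ⟨u, hu⟩ := IsCompact.nonempty_iInter_of_directed_nonempty_isCompact_isClosed
    F hdir hne hcpt hcl
  simp only [Set.mem_iInter] at hu
  have htop' : ∀ N : OpenNormalSubgroup U, u ^ p ^ N.toSubgroup.index ∈ N.toSubgroup :=
    fun N => (hu (N, ⟨⊤, inferInstanceAs (⊤ : Subgroup _).Normal⟩)).1
  have heq : φ u = u' := by
    by_contra h
    have hx : φ u * u'⁻¹ ≠ 1 := fun h1 => h (mul_inv_eq_one.1 h1)
    have hW : ({φ u * u'⁻¹}ᶜ : Set U') ∈ 𝓝 (1 : U') :=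
      (isOpen_compl_singleton).mem_nhds (by simpa using hx.symm)
    obtain ⟨N', hN'⟩ := aux_exists_ons hW
    exact hN' (hu (⟨⊤, inferInstanceAs (⊤ : Subgroup _).Normal⟩, N')).2 rfl
  refine ⟨u, ?_, heq⟩
  rw [(nhds_basis_clopen (1 : U)).tendsto_right_iff]
  rintro sW ⟨h1s, hs⟩
  obtain ⟨N, hNs⟩ := aux_exists_ons (hs.2.mem_nhds h1s)
  filter_upwards [eventually_ge_atTop N.toSubgroup.index] with n hn
  have : u ^ p ^ n ∈ N.toSubgroup := by
    have h1 : p ^ n = p ^ N.toSubgroup.index * p ^ (n - N.toSubgroup.index) := by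
      rw [← pow_add, Nat.add_sub_cancel' hn]
    rw [h1, pow_mul]
    exact pow_mem (htop' N) _
  exact hNs this
end

section
/- Let G = G₁ × … × G_c be a finite product of groups, let H ≤ G be a subgroup, and let Σ be a simple group which is a quotient of H (i.e. there exists a surjective homomorphism q : H → Σ). Then there exist an index i ∈ {1, …, c} and a subgroup H_i ≤ G_i such that Σ is a quotient of H_i. -/
/-- Let `G = G₁ × … × G_c` be a finite product of groups,
`H ≤ G` a subgroup, and `Σ` a simple group which is a quotient of `H`.  Then
there exist an index `i` and a subgroup `Hᵢ ≤ Gᵢ` such that `Σ` is a quotient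
of `Hᵢ`. -/
theorem stmt_9 {c : ℕ} (G : Fin c → Type*) [∀ i, Group (G i)]
    (H : Subgroup ((i : Fin c) → G i))
    (S : Type*) [Group S] [IsSimpleGroup S]
    (q : H →* S) (hq : Function.Surjective q) :
    ∃ (i : Fin c) (Hi : Subgroup (G i)) (f : Hi →* S), Function.Surjective f := by
  classical
  set F : ℕ → Subgroup H := fun k =>
    ⨅ (j : Fin c) (_ : (j : ℕ) < k), ((Pi.evalMonoidHom G j).comp H.subtype).ker with hF
  have hFmem : ∀ k (x : H), x ∈ F k ↔ ∀ j : Fin c, (j : ℕ) < k →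
      (x : ∀ i, G i) j = 1 := by
    intro k x
    simp [hF, Subgroup.mem_iInf, MonoidHom.mem_ker]
  have hFnormal : ∀ k, (F k).Normal := by
    intro k
    constructor
    intro n hn g
    rw [hFmem] at hn ⊢
    intro j hj
    have h1 := hn j hj
    show ((g : ∀ i, G i) * n * (g : ∀ i, G i)⁻¹) j = 1
    simp [h1]
  set Q : ℕ → Subgroup S := fun k => (F k).map q with hQ
  have hQnormal : ∀ k, (Q k).Normal := fun k => (hFnormal k).map q hq
  have hQtb : ∀ k, Q k = ⊥ ∨ Q k = ⊤ := fun k =>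
    IsSimpleGroup.eq_bot_or_eq_top_of_normal (Q k) (hQnormal k)
  have hQ0 : Q 0 = ⊤ := by
    have hF0 : F 0 = ⊤ := by
      rw [eq_top_iff]; intro x _; rw [hFmem]; intro j hj; omega
    rw [hQ]
    simp only [hF0]
    rw [Subgroup.map_top_of_surjective q hq]
  have hQc : Q c = ⊥ := by
    rw [eq_bot_iff]
    rintro s ⟨x, hx, rfl⟩
    rw [SetLike.mem_coe, hFmem] at hx
    have hx1 : x = 1 := by
      ext j
      exact hx j j.isLt
    simp [hx1]
  have hex : ∃ n, Q n = ⊥ := ⟨c, hQc⟩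
  set k := Nat.find hex with hk
  have hkbot : Q k = ⊥ := Nat.find_spec hex
  have hk0 : k ≠ 0 := by
    intro h
    rw [h, hQ0] at hkbot
    exact absurd hkbot.symm bot_ne_top
  have hkc : k ≤ c := Nat.find_le hQc
  have hktop : Q (k - 1) = ⊤ := by
    rcases hQtb (k - 1) with h | h
    · exact absurd h (Nat.find_min hex (by omega))
    · exact h
  have hic : k - 1 < c := by omega
  set i : Fin c := ⟨k - 1, hic⟩ with hi
  set φ : F (k - 1) →* G i := ((Pi.evalMonoidHom G i).comp H.subtype).comp (F (k - 1)).subtype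
    with hφ
  set q' : F (k - 1) →* S := q.comp (F (k - 1)).subtype with hq'
  have hq'surj : Function.Surjective q' := by
    intro s
    have : s ∈ Q (k - 1) := hktop ▸ Subgroup.mem_top s
    obtain ⟨x, hx, rfl⟩ := this
    exact ⟨⟨x, hx⟩, rfl⟩
  have hker : ∀ x ∈ φ.ker, q' x = 1 := by
    intro x hx
    have hxk : (x : H) ∈ F k := by
      rw [hFmem]
      intro j hj
      rcases Nat.lt_or_ge (j : ℕ) (k - 1) with h | h
      · have := ((hFmem (k - 1) (x : H)).mp x.2) j h
        exact this
      · have hji : j = i := by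
          apply Fin.ext
          simp [hi]
          omega
        subst hji
        exact hx
    have : q (x : H) ∈ Q k := ⟨(x : H), hxk, rfl⟩
    rw [hkbot] at this
    simpa [hq'] using this
  refine ⟨i, φ.range, (QuotientGroup.lift φ.ker q' hker).comp
    (QuotientGroup.quotientKerEquivRange φ).symm.toMonoidHom, ?_⟩
  have hlift : Function.Surjective (QuotientGroup.lift φ.ker q' hker) := by
    intro s
    obtain ⟨x, rfl⟩ := hq'surj s
    exact ⟨QuotientGroup.mk x, rfl⟩
  exact hlift.comp (QuotientGroup.quotientKerEquivRange φ).symm.surjective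
end

section
/- Let p be a prime, let A be a commutative ℤ_p-algebra which is flat as a ℤ_p-module and such that A/pA is reduced. Let K be a field containing ℚ_p, and let Γ be a group of K-algebra automorphisms of A ⊗_{ℤ_p} K. Define A^Γ = {a ∈ A : γ(a ⊗ 1) = a ⊗ 1 for all γ ∈ Γ}, a subalgebra of A. Then A^Γ / p·A^Γ is reduced. -/
open scoped TensorProduct

/-- Let `p` be a prime, `A` a commutative `ℤ_p`-algebra,
flat as a `ℤ_p`-module, with `A/pA` reduced.  Let `K` be a field containing
`ℚ_p`, and `Γ` a group of `K`-algebra automorphisms of `A ⊗_{ℤ_p} K`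
(written here as `K ⊗[ℤ_p] A`).  Let `B = A^Γ` be the subalgebra of `Γ`-fixed
elements of `A`, i.e. those `a ∈ A` with `γ(1 ⊗ a) = 1 ⊗ a` for all `γ ∈ Γ`.
Then `A^Γ / p·A^Γ` is reduced. -/
theorem stmt_11 (p : ℕ) [Fact p.Prime]
    (A : Type*) [CommRing A] [Algebra ℤ_[p] A] [Module.Flat ℤ_[p] A]
    (hred : IsReduced (A ⧸ (Ideal.span {(p : A)})))
    (K : Type*) [Field K] [Algebra ℚ_[p] K] [Algebra ℤ_[p] K]
    [IsScalarTower ℤ_[p] ℚ_[p] K]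
    (Γ : Subgroup ((K ⊗[ℤ_[p]] A) ≃ₐ[K] (K ⊗[ℤ_[p]] A)))
    (B : Subalgebra ℤ_[p] A)
    (hB : ∀ a : A, a ∈ B ↔ ∀ γ ∈ Γ, γ ((1 : K) ⊗ₜ[ℤ_[p]] a) = (1 : K) ⊗ₜ[ℤ_[p]] a) :
    IsReduced (B ⧸ (Ideal.span {(p : B)})) := by
  have hK : CharZero K :=
    charZero_of_injective_algebraMap (algebraMap ℚ_[p] K).injective
  have hpK : IsUnit ((p : K ⊗[ℤ_[p]] A)) := by
    have : ((p : K) : K) ≠ 0 := Nat.cast_ne_zero.mpr (Fact.out : p.Prime).pos.ne'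
    have hu : IsUnit ((p : K)) := isUnit_iff_ne_zero.mpr this
    have := hu.map (algebraMap K (K ⊗[ℤ_[p]] A))
    rwa [map_natCast] at this
  -- key step: if b ∈ B is divisible by p in A, it is divisible by p in B
  have key : ∀ b : B, (b : A) ∈ Ideal.span {(p : A)} → b ∈ Ideal.span {(p : B)} := by
    intro b hb
    rw [Ideal.mem_span_singleton] at hb ⊢
    obtain ⟨a, ha⟩ := hb
    have ha' : a ∈ B := by
      rw [hB]
      intro γ hγ
      have hfix := (hB (b : A)).mp b.2 γ hγ
      have e : (1 : K) ⊗ₜ[ℤ_[p]] (b : A) = p • ((1 : K) ⊗ₜ[ℤ_[p]] a) := by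
        rw [ha, ← nsmul_eq_mul, TensorProduct.tmul_smul]
      rw [e, map_nsmul] at hfix
      have : (p : K ⊗[ℤ_[p]] A) * γ ((1 : K) ⊗ₜ[ℤ_[p]] a)
          = (p : K ⊗[ℤ_[p]] A) * ((1 : K) ⊗ₜ[ℤ_[p]] a) := by
        simpa [nsmul_eq_mul] using hfix
      exact hpK.mul_left_cancel this
    refine ⟨⟨a, ha'⟩, ?_⟩
    refine Subtype.ext ?_
    show (b : A) = ((p : B) : A) * a
    rw [ha]
    norm_cast
  constructor
  intro x hx
  obtain ⟨b, rfl⟩ := Ideal.Quotient.mk_surjective x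
  obtain ⟨n, hn⟩ := hx
  rw [← map_pow, Ideal.Quotient.eq_zero_iff_mem, Ideal.mem_span_singleton] at hn
  obtain ⟨c, hc⟩ := hn
  have hA : IsNilpotent (Ideal.Quotient.mk (Ideal.span {(p : A)}) (b : A)) := by
    refine ⟨n, ?_⟩
    rw [← map_pow, Ideal.Quotient.eq_zero_iff_mem, Ideal.mem_span_singleton]
    exact ⟨(c : A), by exact_mod_cast congrArg Subtype.val hc⟩
  have h0 := hred.eq_zero _ hA
  rw [Ideal.Quotient.eq_zero_iff_mem] at h0
  rw [Ideal.Quotient.eq_zero_iff_mem]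
  exact key b h0
end

section
/- Let d₁, …, d_k be n×n matrices with integer entries, and let Z = {b ∈ M_n(ℤ) : b·d_j = d_j·b for j = 1, …, k} be their common centralizer in M_n(ℤ). Then there exists an integer M such that for every prime ℓ > M, the reduction-mod-ℓ map induces an isomorphism of F_ℓ-algebras from Z ⊗ F_ℓ onto the centralizer {b̄ ∈ M_n(F_ℓ) : b̄·d̄_j = d̄_j·b̄ for all j} of the reductions d̄₁, …, d̄_k in M_n(F_ℓ). -/
/-- Key lemma: for a submodule `N` of a finite free `ℤ`-module `W`, there is a bound `M`
(product of the Smith normal form elementary divisors) such that for every prime `ℓ > M`,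
any element of `N` divisible by `ℓ` inside `W` is divisible by `ℓ` inside `N`. -/
theorem snf_div_lemma (W : Type*) [AddCommGroup W]
    [Module.Free ℤ W] [Module.Finite ℤ W] (N : Submodule ℤ W) :
    ∃ M : ℕ, ∀ ℓ : ℕ, ℓ.Prime → M < ℓ → ∀ x ∈ N, ∀ c : W, x = (ℓ : ℤ) • c →
      ∃ x' ∈ N, x = (ℓ : ℤ) • x' := by
  classical
  obtain ⟨m, snf⟩ := N.smithNormalForm (Module.Free.chooseBasis ℤ W)
  refine ⟨∏ i, (snf.a i).natAbs, fun ℓ hℓ hMℓ x hx c hc => ?_⟩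
  have ha0 : ∀ i, snf.a i ≠ 0 := by
    intro i hi
    have h : (snf.bN i : W) = 0 := by rw [snf.snf i, hi, zero_smul]
    exact snf.bN.ne_zero i (Subtype.coe_injective h)
  have hprod : ∏ j, (snf.a j).natAbs ≠ 0 := by
    rw [Finset.prod_ne_zero_iff]
    exact fun i _ h0 => ha0 i (Int.natAbs_eq_zero.mp h0)
  have hnd : ∀ i, ¬ ((ℓ : ℤ) ∣ snf.a i) := by
    intro i hi
    have h1 : ℓ ∣ (snf.a i).natAbs := Int.natCast_dvd.mp hi
    have h2 : (snf.a i).natAbs ∣ ∏ j, (snf.a j).natAbs :=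
      Finset.dvd_prod_of_mem _ (Finset.mem_univ i)
    have h4 := Nat.le_of_dvd (Nat.pos_of_ne_zero (fun h0 =>
      ha0 i (Int.natAbs_eq_zero.mp h0))) h1
    have h5 := Nat.le_of_dvd (Nat.pos_of_ne_zero hprod) h2
    omega
  -- coordinates of x in the SNF basis of N are divisible by ℓ
  have hdivN : ∀ i, (ℓ : ℤ) ∣ snf.bN.repr ⟨x, hx⟩ i := by
    intro i
    have h1 := snf.repr_apply_embedding_eq_repr_smul (m := ⟨x, hx⟩) (i := i)
    have hml : (ℓ : ℤ) ∣ snf.bM.repr x (snf.f i) := by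
      rw [hc, map_smul]
      simp only [Finsupp.smul_apply, smul_eq_mul]
      exact ⟨snf.bM.repr c (snf.f i), rfl⟩
    rw [h1] at hml
    simp only [map_smul, Finsupp.smul_apply, smul_eq_mul] at hml
    rcases (Nat.prime_iff_prime_int.mp hℓ).dvd_mul.mp hml with h | h
    · exact absurd h (hnd i)
    · exact h
  refine ⟨∑ i, (snf.bN.repr ⟨x, hx⟩ i / (ℓ : ℤ)) • ((snf.bN i : W)), ?_, ?_⟩
  · exact Submodule.sum_smul_mem N _ (fun i _ => (snf.bN i).2)
  · have hsum : ∑ i, snf.bN.repr ⟨x, hx⟩ i • ((snf.bN i : W)) = x := by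
      simpa [-Module.Basis.sum_repr] using congrArg Subtype.val (snf.bN.sum_repr ⟨x, hx⟩)
    have h7 : ∑ i, (ℓ : ℤ) • ((snf.bN.repr ⟨x, hx⟩ i / (ℓ : ℤ)) • ((snf.bN i : W)))
        = ∑ i, snf.bN.repr ⟨x, hx⟩ i • ((snf.bN i : W)) :=
      Finset.sum_congr rfl fun i _ => by rw [smul_smul, Int.mul_ediv_cancel' (hdivN i)]
    rw [Finset.smul_sum, h7]
    exact hsum.symm

/-- Let `d₁, …, d_k ∈ M_n(ℤ)` and let
`Z = {b ∈ M_n(ℤ) : b·dⱼ = dⱼ·b for all j}` be their common centralizer.  There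
exists `M` such that for every prime `ℓ > M`, the entrywise reduction mod `ℓ`
induces an isomorphism of `F_ℓ`-algebras `Z ⊗ F_ℓ ≅ Z_{M_n(F_ℓ)}(d̄₁,…,d̄_k)`:
concretely, every matrix mod `ℓ` commuting with all the `d̄ⱼ` lifts to an
element of `Z` (surjectivity), and an element of `Z` reducing to `0` mod `ℓ`
lies in `ℓ·Z` (injectivity of the induced map on `Z/ℓZ`). -/
theorem stmt_13 (n k : ℕ) (d : Fin k → Matrix (Fin n) (Fin n) ℤ) :
    ∃ M : ℕ, ∀ ℓ : ℕ, ℓ.Prime → M < ℓ →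
      (∀ bbar : Matrix (Fin n) (Fin n) (ZMod ℓ),
        (∀ j, bbar * (d j).map (Int.cast : ℤ → ZMod ℓ)
            = (d j).map (Int.cast : ℤ → ZMod ℓ) * bbar) →
        ∃ b : Matrix (Fin n) (Fin n) ℤ, (∀ j, b * d j = d j * b) ∧
          b.map (Int.cast : ℤ → ZMod ℓ) = bbar) ∧
      (∀ b : Matrix (Fin n) (Fin n) ℤ, (∀ j, b * d j = d j * b) →
        b.map (Int.cast : ℤ → ZMod ℓ) = 0 →
        ∃ b' : Matrix (Fin n) (Fin n) ℤ,
          (∀ j, b' * d j = d j * b') ∧ b = (ℓ : ℤ) • b') := by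
  classical
  set φ : Matrix (Fin n) (Fin n) ℤ →ₗ[ℤ] (Fin k → Matrix (Fin n) (Fin n) ℤ) :=
    LinearMap.pi fun j => LinearMap.mulRight ℤ (d j) - LinearMap.mulLeft ℤ (d j) with hφ
  have hφ_apply : ∀ (b : Matrix (Fin n) (Fin n) ℤ) (j : Fin k),
      φ b j = b * d j - d j * b := by
    intro b j
    simp [hφ, LinearMap.pi_apply, LinearMap.sub_apply, LinearMap.mulRight_apply,
      LinearMap.mulLeft_apply]
  obtain ⟨M, hM⟩ := snf_div_lemma (Fin k → Matrix (Fin n) (Fin n) ℤ) (LinearMap.range φ)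
  refine ⟨M, fun ℓ hℓ hMℓ => ⟨?_, ?_⟩⟩
  · -- surjectivity
    intro bbar hbbar
    haveI : NeZero ℓ := ⟨hℓ.ne_zero⟩
    set b₀ : Matrix (Fin n) (Fin n) ℤ := bbar.map (fun x => (x.val : ℤ)) with hb₀def
    have hb₀ : b₀.map (Int.cast : ℤ → ZMod ℓ) = bbar := by
      ext i j
      simp only [hb₀def, Matrix.map_apply, Int.cast_natCast]
      exact ZMod.natCast_rightInverse (bbar i j)
    have hent : ∀ (j : Fin k) (i i' : Fin n), (ℓ : ℤ) ∣ φ b₀ j i i' := by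
      intro j i i'
      rw [hφ_apply, ← ZMod.intCast_zmod_eq_zero_iff_dvd]
      have h := congrFun (congrFun (hbbar j) i) i'
      rw [← hb₀] at h
      simp only [Matrix.mul_apply, Matrix.map_apply, Matrix.sub_apply] at h ⊢
      push_cast
      rw [sub_eq_zero]
      exact h
    have hc : ∃ c : Fin k → Matrix (Fin n) (Fin n) ℤ, φ b₀ = (ℓ : ℤ) • c := by
      refine ⟨fun j => (φ b₀ j).map (fun t => t / (ℓ : ℤ)), ?_⟩
      funext j
      ext i i'
      simp only [Pi.smul_apply, Matrix.smul_apply, Matrix.map_apply, smul_eq_mul]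
      exact (Int.mul_ediv_cancel' (hent j i i')).symm
    obtain ⟨c, hc⟩ := hc
    obtain ⟨x', hx'mem, hx'⟩ := hM ℓ hℓ hMℓ (φ b₀) (LinearMap.mem_range_self φ b₀) c hc
    obtain ⟨w, hw⟩ := hx'mem
    refine ⟨b₀ - (ℓ : ℤ) • w, ?_, ?_⟩
    · intro j
      have h0 : φ (b₀ - (ℓ : ℤ) • w) = 0 := by
        rw [map_sub, map_smul, hw, ← hx', sub_self]
      have h2 := congrFun h0 j
      rw [hφ_apply] at h2
      simp only [Pi.zero_apply] at h2
      exact sub_eq_zero.mp h2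
    · ext i i'
      have hz : (((ℓ : ℤ) * w i i' : ℤ) : ZMod ℓ) = 0 := by
        rw [ZMod.intCast_zmod_eq_zero_iff_dvd]
        exact Dvd.intro _ rfl
      have hb := congrFun (congrFun hb₀ i) i'
      simp only [Matrix.map_apply] at hb
      simp only [Matrix.map_apply, Matrix.sub_apply, Matrix.smul_apply, smul_eq_mul,
        Int.cast_sub, hz, sub_zero, hb]
  · -- injectivity
    intro b hbcomm hb0
    have hent : ∀ i i', (ℓ : ℤ) ∣ b i i' := by
      intro i i'
      rw [← ZMod.intCast_zmod_eq_zero_iff_dvd]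
      have := congrFun (congrFun hb0 i) i'
      simpa [Matrix.map_apply] using this
    have hbeq : b = (ℓ : ℤ) • b.map (fun t => t / (ℓ : ℤ)) := by
      ext i i'
      simp only [Matrix.smul_apply, Matrix.map_apply, smul_eq_mul]
      exact (Int.mul_ediv_cancel' (hent i i')).symm
    refine ⟨b.map (fun t => t / (ℓ : ℤ)), ?_, hbeq⟩
    intro j
    have hℓ0 : (ℓ : ℤ) ≠ 0 := Int.natCast_ne_zero.mpr hℓ.ne_zero
    have h := hbcomm j
    rw [hbeq, Matrix.smul_mul, Matrix.mul_smul] at h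
    exact smul_right_injective _ hℓ0 h
end

section
/- Let G = ∏_p GL(n, ℤ_p), the product over all primes p of the groups GL(n, ℤ_p), equipped with the product topology. Let u = (u_p)_p ∈ G be such that for every prime p, the image of u_p under the reduction map GL(n, ℤ_p) → GL(n, F_p) has order a power of p. Then for every prime ℓ, the element v ∈ G whose ℓ-th component equals u_ℓ and whose p-th component is the identity matrix for every prime p ≠ ℓ belongs to the closure of the cyclic subgroup {u^k : k ∈ ℤ} in G. -/
open scoped MatrixGroups

instance (p : Nat.Primes) : Fact (p : ℕ).Prime := ⟨p.2⟩

/-- The full product `G = ∏_p GL(n, ℤ_p)` over all primes, with the product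
topology. -/
abbrev AdelicGL (n : ℕ) : Type := (p : Nat.Primes) → GL (Fin n) ℤ_[(p : ℕ)]

/-- Reduction `GL(n, ℤ_p) → GL(n, F_p)`, induced by entrywise reduction
`ℤ_p → F_p`. -/
noncomputable def redGL (n : ℕ) (p : Nat.Primes) :
    GL (Fin n) ℤ_[(p : ℕ)] →* GL (Fin n) (ZMod (p : ℕ)) :=
  Units.map (PadicInt.toZMod.mapMatrix.toMonoidHom)

/-!
Some power `u_p ^ p ^ a` reduces to `1`, i.e. equals `1 + p B` as a matrix, and then
`(1 + p B) ^ (p ^ k * s) ≡ 1 mod p ^ (k + 1)` for every `s`; so `u_p ^ e → 1` along any exponents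
`e` that become divisible by ever higher powers of `p`. By the Chinese remainder theorem there are
exponents `e_k = 1 + ℓ ^ k s_k` divisible by `p ^ k` for all primes `p ≠ ℓ` up to `k`, and along
them `u ^ e_k` converges to the element with `ℓ`-component `u_ℓ` and all other components `1`.
-/

open Filter Topology Polynomial

theorem prime_pow_succ_dvd_pow_mul_sub_one {A : Type*} [Ring A] {p : ℕ} {a : A}
    (h : (p : A) ∣ a - 1) (k s : ℕ) : (p : A) ^ (k + 1) ∣ a ^ (p ^ k * s) - 1 := by
  obtain ⟨x, hx⟩ := h
  -- `A` need not be commutative: prove the universal case in `ℤ[X]` and evaluate at `x`.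
  have hp : (p : ℤ[X]) ∣ (1 + (p : ℤ[X]) * X) - 1 := by
    rw [add_sub_cancel_left]; exact dvd_mul_right _ _
  have hX := dvd_sub_pow_of_dvd_sub hp k
  rw [one_pow] at hX
  replace hX := hX.trans (sub_one_dvd_pow_sub_one _ s)
  rw [← pow_mul] at hX
  simpa [eq_add_of_sub_eq' hx] using map_dvd (aeval x) hX

theorem Nat.exists_dvd_one_add_mul_of_coprime {a b : ℕ} (h : a.Coprime b) (hb : b ≠ 0) :
    ∃ s, b ∣ 1 + a * s := by
  have : NeZero b := ⟨hb⟩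
  refine ⟨(-(a : ZMod b)⁻¹).val, ?_⟩
  rw [← ZMod.natCast_eq_zero_iff]
  push_cast
  rw [ZMod.natCast_zmod_val, mul_neg, ZMod.coe_mul_inv_eq_one a h, add_neg_cancel]

theorem exists_eventually_prime_pow_dvd_one_add_pow_mul {ℓ : ℕ} (hℓ : ℓ.Prime) :
    ∃ s : ℕ → ℕ, ∀ p : ℕ, p.Prime → p ≠ ℓ → ∀ᶠ k in atTop, p ^ k ∣ 1 + ℓ ^ k * s k := by
  have hcop (k : ℕ) : (ℓ ^ k).Coprime (ordCompl[ℓ] k.factorial ^ k) :=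
    (Nat.coprime_ordCompl hℓ k.factorial_ne_zero).pow k k
  have hne (k : ℕ) : ordCompl[ℓ] k.factorial ^ k ≠ 0 :=
    pow_ne_zero k (Nat.ordCompl_pos ℓ k.factorial_ne_zero).ne'
  choose s hs using fun k => Nat.exists_dvd_one_add_mul_of_coprime (hcop k) (hne k)
  refine ⟨s, fun p hp hpℓ => eventually_atTop.2 ⟨p, fun k hk => ?_⟩⟩
  have hℓp : ¬ℓ ∣ p := fun h => hpℓ ((Nat.prime_dvd_prime_iff_eq hℓ hp).mp h).symm
  have hp_dvd : p ∣ ordCompl[ℓ] k.factorial :=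
    Nat.dvd_ordCompl_of_dvd_not_dvd (Nat.dvd_factorial hp.pos hk) hℓp
  exact (pow_dvd_pow_of_dvd hp_dvd k).trans (hs k)

theorem Units.tendsto_of_tendsto_val {M α : Type*} [Monoid M] [TopologicalSpace M]
    {f : α → Mˣ} {l : Filter α} {u : Mˣ} (hf : Tendsto (fun x => (f x : M)) l (𝓝 u))
    (hf_inv : Tendsto (fun x => ((f x)⁻¹ : Mˣ) : α → M) l (𝓝 ↑u⁻¹)) :
    Tendsto f l (𝓝 u) := by
  rw [Units.isInducing_embedProduct.tendsto_nhds_iff]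
  exact hf.prodMk_nhds ((MulOpposite.continuous_op.tendsto _).comp hf_inv)

theorem PadicInt.tendsto_matrix_of_prime_pow_dvd_sub_one {n p : ℕ} [Fact p.Prime]
    {M : ℕ → Matrix (Fin n) (Fin n) ℤ_[p]}
    (h : ∀ k, (p : Matrix (Fin n) (Fin n) ℤ_[p]) ^ k ∣ M k - 1) :
    Tendsto M atTop (𝓝 1) := by
  choose N hN using h
  refine tendsto_pi_nhds.2 fun i => tendsto_pi_nhds.2 fun j => ?_
  rw [tendsto_iff_norm_sub_tendsto_zero]
  refine squeeze_zero (fun _ => norm_nonneg _) (fun k => ?_)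
    (tendsto_pow_atTop_nhds_zero_of_lt_one (norm_nonneg (p : ℤ_[p]))
      (by rw [PadicInt.norm_p, ← Padic.norm_p]; exact Padic.norm_p_lt_one))
  rw [← Matrix.sub_apply, hN k, ← Nat.cast_pow, ← nsmul_eq_mul, Matrix.smul_apply,
    nsmul_eq_mul, norm_mul, Nat.cast_pow, norm_pow]
  exact mul_le_of_le_one_right (by positivity) (PadicInt.norm_le_one _)

section Reduction

variable {n : ℕ} {p : Nat.Primes}

theorem natCast_dvd_val_sub_one_of_redGL_eq_one {g : GL (Fin n) ℤ_[(p : ℕ)]}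
    (hg : redGL n p g = 1) :
    ((p : ℕ) : Matrix (Fin n) (Fin n) ℤ_[(p : ℕ)]) ∣
      (g : Matrix (Fin n) (Fin n) ℤ_[(p : ℕ)]) - 1 := by
  have hker : PadicInt.toZMod.mapMatrix ((g : Matrix (Fin n) (Fin n) ℤ_[(p : ℕ)]) - 1) = 0 := by
    rw [map_sub, map_one, sub_eq_zero]
    exact congrArg Units.val hg
  have hdvd (i j : Fin n) :
      ((p : ℕ) : ℤ_[(p : ℕ)]) ∣ ((g : Matrix (Fin n) (Fin n) ℤ_[(p : ℕ)]) - 1) i j := by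
    rw [← Ideal.mem_span_singleton, ← PadicInt.maximalIdeal_eq_span_p, ← PadicInt.ker_toZMod]
    exact congrFun₂ hker i j
  choose B hB using hdvd
  refine ⟨Matrix.of B, Matrix.ext fun i j => ?_⟩
  rw [hB i j, ← nsmul_eq_mul _ (Matrix.of B), Matrix.smul_apply, nsmul_eq_mul, Matrix.of_apply]

theorem tendsto_pow_prime_pow_mul_of_redGL_eq_one {g : GL (Fin n) ℤ_[(p : ℕ)]}
    (hg : redGL n p g = 1) (s : ℕ → ℕ) :
    Tendsto (fun k => g ^ ((p : ℕ) ^ k * s k)) atTop (𝓝 1) := by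
  have hval {h : GL (Fin n) ℤ_[(p : ℕ)]} (hh : redGL n p h = 1) :
      Tendsto (fun k => ((h ^ ((p : ℕ) ^ k * s k) : GL (Fin n) ℤ_[(p : ℕ)]) :
        Matrix (Fin n) (Fin n) ℤ_[(p : ℕ)])) atTop (𝓝 1) :=
    PadicInt.tendsto_matrix_of_prime_pow_dvd_sub_one fun k => by
      rw [Units.val_pow_eq_pow_val]
      exact (pow_dvd_pow _ k.le_succ).trans (prime_pow_succ_dvd_pow_mul_sub_one
        (natCast_dvd_val_sub_one_of_redGL_eq_one hh) k (s k))
  refine Units.tendsto_of_tendsto_val (hval hg) ?_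
  simpa only [← inv_pow, inv_one, Units.val_one] using
    hval (h := g⁻¹) (by rw [map_inv, hg, inv_one])

theorem tendsto_pow_prime_pow_mul {g : GL (Fin n) ℤ_[(p : ℕ)]}
    (hg : ∃ a : ℕ, orderOf (redGL n p g) = (p : ℕ) ^ a) (s : ℕ → ℕ) :
    Tendsto (fun k => g ^ ((p : ℕ) ^ k * s k)) atTop (𝓝 1) := by
  obtain ⟨a, ha⟩ := hg
  have hga : redGL n p (g ^ (p : ℕ) ^ a) = 1 := by rw [map_pow, ← ha, pow_orderOf_eq_one]
  rw [← tendsto_add_atTop_iff_nat a]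
  convert tendsto_pow_prime_pow_mul_of_redGL_eq_one hga (fun k => s (k + a)) using 2 with k
  rw [← pow_mul, ← mul_assoc, ← pow_add, add_comm a]

theorem tendsto_pow_of_eventually_prime_pow_dvd {g : GL (Fin n) ℤ_[(p : ℕ)]}
    (hg : ∃ a : ℕ, orderOf (redGL n p g) = (p : ℕ) ^ a) {e : ℕ → ℕ}
    (he : ∀ᶠ k in atTop, (p : ℕ) ^ k ∣ e k) : Tendsto (fun k => g ^ e k) atTop (𝓝 1) :=
  (tendsto_pow_prime_pow_mul hg fun k => e k / (p : ℕ) ^ k).congr' <|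
    he.mono fun k hk => by rw [Nat.mul_div_cancel' hk]

end Reduction

/-- Let `u = (u_p)_p ∈ G = ∏_p GL(n, ℤ_p)` be such that for
every prime `p` the image of `u_p` in `GL(n, F_p)` has order a power of `p`.
Then for every prime `ℓ`, the element of `G` with `ℓ`-component `u_ℓ` and all
other components the identity belongs to the closure of the cyclic subgroup
`{u^k : k ∈ ℤ}` in `G`. -/
theorem stmt_14 (n : ℕ) (u : AdelicGL n)
    (hu : ∀ p : Nat.Primes, ∃ k : ℕ, orderOf (redGL n p (u p)) = (p : ℕ) ^ k) :
    ∀ ℓ : Nat.Primes,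
      Function.update (1 : AdelicGL n) ℓ (u ℓ) ∈
        closure ((Subgroup.zpowers u : Subgroup (AdelicGL n)) : Set (AdelicGL n)) := by
  intro ℓ
  obtain ⟨s, hs⟩ := exists_eventually_prime_pow_dvd_one_add_pow_mul ℓ.2
  have hlim : Tendsto (fun k => u ^ (1 + (ℓ : ℕ) ^ k * s k)) atTop
      (𝓝 (Function.update 1 ℓ (u ℓ))) := by
    refine tendsto_pi_nhds.2 fun p => ?_
    rcases eq_or_ne p ℓ with rfl | hpℓ
    · simp only [Pi.pow_apply, Function.update_self, pow_add, pow_one]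
      simpa using (tendsto_pow_prime_pow_mul (hu p) s).const_mul (u p)
    · simp only [Pi.pow_apply, Function.update_of_ne hpℓ, Pi.one_apply]
      exact tendsto_pow_of_eventually_prime_pow_dvd (hu p)
        (hs p p.2 (Subtype.coe_injective.ne hpℓ))
  exact mem_closure_of_tendsto hlim (Eventually.of_forall fun k => Subgroup.npow_mem_zpowers u _)
end

section
/- Let G = ∏_p GL(n, ℤ_p) with the product topology, and for each prime p let G_p ≤ G be the subgroup of elements whose components at all primes different from p are the identity. Let Γ ≤ G be a subgroup generated by a set of elements u = (u_p)_p each satisfying: for every prime p, the image of u_p in GL(n, F_p) has order a power of p. Then an element g = (g_p)_p of G lies in the closure of Γ if and only if, for every prime p, the element of G_p whose p-th component is g_p lies in the closure of Γ; equivalently, the closure of Γ equals the product over all primes p of the subgroups (closure of Γ) ∩ G_p. -/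
open scoped MatrixGroups
open Topology

namespace Stmt15

variable {p : ℕ} [hp : Fact p.Prime] {n : ℕ}

/-- Entrywise congruence modulo `p^m` for matrices over `ℤ_p`. -/
def MCong (m : ℕ) (A B : Matrix (Fin n) (Fin n) ℤ_[p]) : Prop :=
  ∀ i j, ‖(A - B) i j‖ ≤ (p : ℝ) ^ (-(m : ℤ))

lemma one_lt_p : (1 : ℝ) < (p : ℝ) := by exact_mod_cast hp.1.one_lt

lemma norm_sum_le_max {ι : Type*} (s : Finset ι) (f : ι → ℤ_[p]) {c : ℝ} (hc : 0 ≤ c)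
    (h : ∀ i ∈ s, ‖f i‖ ≤ c) : ‖∑ i ∈ s, f i‖ ≤ c := by
  classical
  induction s using Finset.induction_on with
  | empty => simpa using hc
  | insert _ _ ha ih =>
    rw [Finset.sum_insert ha]
    exact (PadicInt.nonarchimedean _ _).trans
      (max_le (h _ (Finset.mem_insert_self _ _))
        (ih fun i hi => h i (Finset.mem_insert_of_mem hi)))

lemma MCong.refl (m : ℕ) (A : Matrix (Fin n) (Fin n) ℤ_[p]) : MCong m A A := by
  intro i j
  simp [Matrix.sub_apply]

lemma MCong.symm {m : ℕ} {A B : Matrix (Fin n) (Fin n) ℤ_[p]} (h : MCong m A B) :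
    MCong m B A := by
  intro i j
  have : (B - A) i j = -((A - B) i j) := by simp [Matrix.sub_apply]
  rw [this, norm_neg]
  exact h i j

lemma MCong.mono {m m' : ℕ} (hm : m ≤ m') {A B : Matrix (Fin n) (Fin n) ℤ_[p]}
    (h : MCong m' A B) : MCong m A B := by
  intro i j
  exact (h i j).trans (zpow_le_zpow_right₀ (le_of_lt one_lt_p) (by omega))

lemma MCong.mul {m : ℕ} {A B C D : Matrix (Fin n) (Fin n) ℤ_[p]}
    (h1 : MCong m A B) (h2 : MCong m C D) : MCong m (A * C) (B * D) := by
  intro i j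
  have hc : (0 : ℝ) ≤ (p : ℝ) ^ (-(m : ℤ)) := by positivity
  have key : (A * C - B * D) i j
      = ∑ k, (A i k * (C - D) k j + (A - B) i k * D k j) := by
    simp only [Matrix.sub_apply, Matrix.mul_apply, ← Finset.sum_sub_distrib]
    exact Finset.sum_congr rfl fun k _ => by ring
  rw [key]
  refine norm_sum_le_max _ _ hc fun k _ => ?_
  refine (PadicInt.nonarchimedean _ _).trans (max_le ?_ ?_)
  · calc ‖A i k * (C - D) k j‖ = ‖A i k‖ * ‖(C - D) k j‖ := norm_mul _ _
      _ ≤ 1 * ((p : ℝ) ^ (-(m : ℤ))) :=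
        mul_le_mul (PadicInt.norm_le_one _) (h2 k j) (norm_nonneg _) zero_le_one
      _ = _ := one_mul _
  · calc ‖(A - B) i k * D k j‖ = ‖(A - B) i k‖ * ‖D k j‖ := norm_mul _ _
      _ ≤ ((p : ℝ) ^ (-(m : ℤ))) * 1 :=
        mul_le_mul (h1 i k) (PadicInt.norm_le_one _) (norm_nonneg _) hc
      _ = _ := mul_one _

lemma MCong.pow_one_right {m : ℕ} {A : Matrix (Fin n) (Fin n) ℤ_[p]}
    (h : MCong m A 1) : ∀ t : ℕ, MCong m (A ^ t) 1 := by
  intro t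
  induction t with
  | zero => simpa [pow_zero] using MCong.refl m (1 : Matrix (Fin n) (Fin n) ℤ_[p])
  | succ t ih => simpa [pow_succ] using ih.mul h

lemma MCong.units_inv {m : ℕ} {y x : GL (Fin n) ℤ_[p]}
    (h : MCong m (↑y : Matrix (Fin n) (Fin n) ℤ_[p]) ↑x) :
    MCong m (↑y⁻¹ : Matrix (Fin n) (Fin n) ℤ_[p]) ↑x⁻¹ := by
  have h1 : MCong m (↑(y⁻¹ * y * x⁻¹) : Matrix (Fin n) (Fin n) ℤ_[p]) ↑(y⁻¹ * x * x⁻¹) := by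
    simpa only [Units.val_mul] using
      ((MCong.refl m (↑y⁻¹ : Matrix (Fin n) (Fin n) ℤ_[p])).mul h).mul
        (MCong.refl m (↑x⁻¹ : Matrix (Fin n) (Fin n) ℤ_[p]))
  simp only [inv_mul_cancel, one_mul, mul_inv_cancel_right] at h1
  exact h1.symm

/-- Entry bound for powers. -/
lemma entry_pow_le {a : ℝ} (ha : 0 ≤ a) {X : Matrix (Fin n) (Fin n) ℤ_[p]}
    (hX : ∀ i j, ‖X i j‖ ≤ a) : ∀ k, 1 ≤ k → ∀ i j, ‖(X ^ k) i j‖ ≤ a ^ k := by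
  intro k hk
  induction k with
  | zero => omega
  | succ k ih =>
    rcases Nat.eq_zero_or_pos k with rfl | hkk
    · intro i j; simpa using hX i j
    · intro i j
      rw [pow_succ, Matrix.mul_apply]
      refine norm_sum_le_max _ _ (by positivity) fun l _ => ?_
      calc ‖(X ^ k) i l * X l j‖ = ‖(X ^ k) i l‖ * ‖X l j‖ := norm_mul _ _
        _ ≤ a ^ k * a := mul_le_mul (ih hkk i l) (hX l j) (norm_nonneg _) (by positivity)
        _ = a ^ (k + 1) := (pow_succ a k).symm

/-- The key step: a matrix congruent to `1` mod `p^m` has `p`-th power congruent to `1`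
mod `p^(m+1)`. -/
lemma MCong.pow_p {m : ℕ} (hm : 1 ≤ m) {A : Matrix (Fin n) (Fin n) ℤ_[p]}
    (h : MCong m A 1) : MCong (m + 1) (A ^ p) 1 := by
  have hp2 := hp.1.two_le
  set X := A - 1 with hX
  have hXn : ∀ i j, ‖X i j‖ ≤ (p : ℝ) ^ (-(m : ℤ)) := h
  have ha0 : (0:ℝ) ≤ (p : ℝ) ^ (-(m : ℤ)) := by positivity
  have ha1 : ((p : ℝ)) ^ (-(m : ℤ)) ≤ 1 := by
    calc ((p:ℝ)) ^ (-(m : ℤ)) ≤ (p:ℝ) ^ (0 : ℤ) :=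
      zpow_le_zpow_right₀ (le_of_lt one_lt_p) (by omega)
    _ = 1 := zpow_zero _
  have hA : A = X + 1 := by rw [hX]; simp
  have expand : A ^ p - 1 =
      ∑ k ∈ Finset.range p, (p.choose (k+1) : ℕ) • X ^ (k + 1) := by
    rw [hA, (Commute.one_right X).add_pow]
    rw [Finset.sum_range_succ']
    simp only [pow_zero, one_mul, Nat.choose_zero_right, Nat.cast_one, mul_one, one_pow]
    rw [add_sub_cancel_right]
    refine Finset.sum_congr rfl fun k _ => ?_
    rw [nsmul_eq_mul, (Nat.cast_commute (p.choose (k+1)) (X ^ (k+1))).eq]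
  intro i j
  have : (A ^ p - 1) i j = ∑ k ∈ Finset.range p,
      ((p.choose (k+1) : ℤ_[p]) * (X ^ (k + 1)) i j) := by
    rw [expand, Matrix.sum_apply]
    refine Finset.sum_congr rfl fun k _ => ?_
    rw [Matrix.smul_apply, nsmul_eq_mul]
  rw [this]
  refine norm_sum_le_max _ _ (by positivity) fun k hk => ?_
  have hkr := Finset.mem_range.mp hk
  rw [norm_mul]
  rcases Nat.lt_or_ge (k + 1) p with hlt | hge
  · -- p ∣ choose, and X^(k+1) entries ≤ a
    have hdvd : (p : ℕ) ∣ p.choose (k+1) := Nat.Prime.dvd_choose_self hp.1 (by omega) hlt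
    have hnc : ‖(p.choose (k+1) : ℤ_[p])‖ ≤ (p:ℝ) ^ (-(1:ℤ)) := by
      rw [PadicInt.norm_le_pow_iff_norm_lt_pow_add_one]
      simpa using (PadicInt.norm_lt_one_iff_dvd _).mpr (Nat.cast_dvd_cast hdvd)
    have hxk : ‖(X ^ (k+1)) i j‖ ≤ (p : ℝ) ^ (-(m : ℤ)) := by
      refine (entry_pow_le ha0 hXn (k+1) (by omega) i j).trans ?_
      exact pow_le_of_le_one ha0 ha1 (by omega)
    calc ‖(p.choose (k+1) : ℤ_[p])‖ * ‖(X ^ (k+1)) i j‖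
        ≤ (p:ℝ) ^ (-(1:ℤ)) * (p : ℝ) ^ (-(m : ℤ)) :=
          mul_le_mul hnc hxk (norm_nonneg _) (by positivity)
      _ = (p:ℝ) ^ (-((m:ℤ)+1)) := by
          rw [← zpow_add₀ (by positivity : (p:ℝ) ≠ 0)]; ring_nf
      _ = (p:ℝ) ^ (-(((m+1:ℕ)):ℤ)) := by push_cast; ring_nf
  · -- k+1 = p (since k < p): use a^p ≤ p^{-(m+1)}
    have hkp : k + 1 = p := by omega
    have hxk : ‖(X ^ (k+1)) i j‖ ≤ ((p : ℝ) ^ (-(m : ℤ))) ^ (k+1) :=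
      entry_pow_le ha0 hXn (k+1) (by omega) i j
    have hbig : ((p : ℝ) ^ (-(m : ℤ))) ^ (k+1) ≤ (p:ℝ) ^ (-(((m+1:ℕ)):ℤ)) := by
      rw [← zpow_natCast ((p : ℝ) ^ (-(m : ℤ))) (k+1), ← zpow_mul]
      refine zpow_le_zpow_right₀ (le_of_lt one_lt_p) ?_
      rw [hkp]
      push_cast
      nlinarith [hm, hp2]
    calc ‖(p.choose (k+1) : ℤ_[p])‖ * ‖(X ^ (k+1)) i j‖
        ≤ 1 * (((p : ℝ) ^ (-(m : ℤ))) ^ (k+1)) :=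
          mul_le_mul (PadicInt.norm_le_one _) hxk (norm_nonneg _) zero_le_one
      _ = ((p : ℝ) ^ (-(m : ℤ))) ^ (k+1) := one_mul _
      _ ≤ _ := hbig

lemma MCong.prime_pow_tower {A : Matrix (Fin n) (Fin n) ℤ_[p]} {k : ℕ}
    (h1 : MCong 1 (A ^ (p ^ k)) 1) (m : ℕ) :
    MCong (m + 1) (A ^ (p ^ (k + m))) 1 := by
  induction m with
  | zero => simpa using h1
  | succ m ih =>
    have := ih.pow_p (by omega)
    rw [← pow_mul] at this
    rw [show p ^ (k + m) * p = p ^ (k + (m+1)) from (pow_succ p (k+m)).symm] at this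
    exact this

end Stmt15

namespace Stmt15Top

open Stmt15

variable {p : ℕ} [hp : Fact p.Prime] {n : ℕ}

lemma MCong_one_of_toZMod {A : Matrix (Fin n) (Fin n) ℤ_[p]}
    (h2 : A.map (PadicInt.toZMod) = 1) : MCong 1 A 1 := by
  intro i j
  have e1 : PadicInt.toZMod (A i j) = (1 : Matrix (Fin n) (Fin n) (ZMod p)) i j := by
    rw [← h2]; simp [Matrix.map_apply]
  have e2 : PadicInt.toZMod ((1 : Matrix (Fin n) (Fin n) ℤ_[p]) i j)
      = (1 : Matrix (Fin n) (Fin n) (ZMod p)) i j := by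
    simp [Matrix.one_apply, apply_ite (PadicInt.toZMod (p := p))]
  have h3 : PadicInt.toZMod ((A - 1) i j) = 0 := by
    rw [Matrix.sub_apply, map_sub, e1, e2, sub_self]
  have h4 : ((A - 1) i j) ∈ Ideal.span {(p : ℤ_[p]) ^ 1} := by
    rw [pow_one, ← PadicInt.maximalIdeal_eq_span_p, ← PadicInt.ker_toZMod]
    exact h3
  have h5 := (PadicInt.norm_le_pow_iff_mem_span_pow _ 1).mpr h4
  exact_mod_cast h5

lemma matrix_nbhd {x : Matrix (Fin n) (Fin n) ℤ_[p]} {U : Set (Matrix (Fin n) (Fin n) ℤ_[p])}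
    (hU : U ∈ 𝓝 x) :
    ∃ m : ℕ, ∀ y : Matrix (Fin n) (Fin n) ℤ_[p],
      (∀ i j, ‖(y - x) i j‖ ≤ (p : ℝ) ^ (-((m + 1 : ℕ) : ℤ))) → y ∈ U := by
  have hU' : U ∈ @nhds (Fin n → Fin n → ℤ_[p]) _ x := hU
  obtain ⟨ε, hε, hball⟩ := Metric.mem_nhds_iff.mp hU'
  obtain ⟨m, hmlt⟩ := exists_pow_lt_of_lt_one hε
    (inv_lt_one_of_one_lt₀ (one_lt_p (p := p)))
  refine ⟨m, fun y hy => ?_⟩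
  refine hball ?_
  show @dist (Fin n → Fin n → ℤ_[p]) _ y x < ε
  refine (dist_pi_lt_iff hε).mpr ?_
  intro i
  rw [dist_pi_lt_iff hε]
  intro j
  rw [dist_eq_norm]
  calc ‖y i j - x i j‖ ≤ (p : ℝ) ^ (-((m + 1 : ℕ) : ℤ)) := hy i j
    _ = ((p:ℝ)⁻¹) ^ (m + 1) := by
        rw [zpow_neg, zpow_natCast, inv_pow]
    _ ≤ ((p:ℝ)⁻¹) ^ m := pow_le_pow_of_le_one (by positivity)
        (le_of_lt (inv_lt_one_of_one_lt₀ (one_lt_p (p := p)))) (by omega)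
    _ < ε := hmlt

lemma GL_nbhd {x : GL (Fin n) ℤ_[p]} {U : Set (GL (Fin n) ℤ_[p])} (hU : U ∈ 𝓝 x) :
    ∃ m : ℕ, ∀ y : GL (Fin n) ℤ_[p],
      MCong (m + 1) (↑y : Matrix (Fin n) (Fin n) ℤ_[p]) ↑x → y ∈ U := by
  rw [Units.isEmbedding_embedProduct.toIsInducing.nhds_eq_comap, Filter.mem_comap] at hU
  obtain ⟨W, hW, hWsub⟩ := hU
  rw [Units.embedProduct_apply, mem_nhds_prod_iff] at hW
  obtain ⟨W1, hW1, W2, hW2, hprod⟩ := hW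
  have hW2' : (MulOpposite.op) ⁻¹' W2 ∈ 𝓝 ((↑x⁻¹ : Matrix (Fin n) (Fin n) ℤ_[p])) :=
    MulOpposite.continuous_op.continuousAt.preimage_mem_nhds hW2
  obtain ⟨m1, hm1⟩ := matrix_nbhd hW1
  obtain ⟨m2, hm2⟩ := matrix_nbhd hW2'
  refine ⟨max m1 m2, fun y hy => ?_⟩
  refine hWsub (hprod ?_)
  rw [Units.embedProduct_apply, Set.mem_prod]
  constructor
  · exact hm1 _ (hy.mono (by omega))
  · exact hm2 _ ((hy.units_inv).mono (by omega))

end Stmt15Top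

section Main

open Stmt15 Stmt15Top

/-- The projection homomorphism `G → G` keeping only the coordinate at `q`. -/
noncomputable def suppHom (n : ℕ) (q : Nat.Primes) : AdelicGL n →* AdelicGL n where
  toFun g := Function.update (1 : AdelicGL n) q (g q)
  map_one' := Function.update_eq_self q (1 : AdelicGL n)
  map_mul' g h := by
    funext r
    rcases eq_or_ne r q with rfl | hrq
    · simp
    · simp [Function.update_of_ne hrq]

lemma continuous_suppHom (n : ℕ) (q : Nat.Primes) : Continuous (suppHom n q) := by
  apply continuous_pi
  intro r
  rcases eq_or_ne r q with rfl | hrq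
  · have : (fun g : AdelicGL n => (suppHom n r g) r) = fun g => g r := by
      funext g; simp [suppHom]
    rw [this]
    exact continuous_apply r
  · have : (fun g : AdelicGL n => (suppHom n q g) r) = fun _ => (1 : AdelicGL n) r := by
      funext g; simp [suppHom, Function.update_of_ne hrq]
    rw [this]
    exact continuous_const

lemma supp_gen_mem (n : ℕ) (T : Set (AdelicGL n))
    (hT : ∀ u ∈ T, ∀ p : Nat.Primes, ∃ k : ℕ,
      orderOf (redGL n p (u p)) = (p : ℕ) ^ k)
    {u : AdelicGL n} (hu : u ∈ T) (q : Nat.Primes) :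
    Function.update (1 : AdelicGL n) q (u q) ∈
      closure ((Subgroup.closure T : Subgroup (AdelicGL n)) : Set (AdelicGL n)) := by
  classical
  rw [mem_closure_iff_nhds]
  intro U hU
  rw [nhds_pi, Filter.mem_pi] at hU
  obtain ⟨I, hIfin, V, hV, hVsub⟩ := hU
  set kf : Nat.Primes → ℕ := fun r => (hT u hu r).choose with hkf
  have hkspec : ∀ r, orderOf (redGL n r (u r)) = (r : ℕ) ^ kf r :=
    fun r => (hT u hu r).choose_spec
  have hch : ∀ r : Nat.Primes, ∃ m : ℕ, ∀ y : GL (Fin n) ℤ_[(r : ℕ)],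
      MCong (m + 1) (↑y : Matrix (Fin n) (Fin n) ℤ_[(r : ℕ)])
        ↑(Function.update (1 : AdelicGL n) q (u q) r) → y ∈ V r :=
    fun r => GL_nbhd (hV r)
  choose mf hmf using hch
  set F : Finset Nat.Primes := insert q hIfin.toFinset with hF
  set m : ℕ := F.sup mf with hm
  have hbase : ∀ r : Nat.Primes,
      MCong 1 ((↑(u r) : Matrix (Fin n) (Fin n) ℤ_[(r : ℕ)]) ^ ((r : ℕ) ^ kf r)) 1 := by
    intro r
    apply MCong_one_of_toZMod
    have h1 : (redGL n r (u r)) ^ ((r : ℕ) ^ kf r) = 1 := by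
      rw [← hkspec r]; exact pow_orderOf_eq_one _
    have h2 := congrArg Units.val h1
    simpa [redGL, Units.val_pow_eq_pow_val, ← map_pow, RingHom.mapMatrix_apply] using h2
  set E : Nat.Primes → ℕ := fun r => (r : ℕ) ^ (kf r + (m + 1)) with hE
  have hEcong : ∀ r : Nat.Primes, ∀ t : ℕ,
      MCong (m + 2) ((↑(u r) : Matrix (Fin n) (Fin n) ℤ_[(r : ℕ)]) ^ (E r * t)) 1 := by
    intro r t
    have h2 := MCong.prime_pow_tower (hbase r) (m + 1)
    rw [pow_mul]
    exact h2.pow_one_right t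
  set P : ℕ := ∏ r ∈ F.erase q, E r with hP
  have hco : Nat.Coprime (E q) P := by
    apply Nat.Coprime.prod_right
    intro r hr
    have hrq : r ≠ q := (Finset.mem_erase.mp hr).1
    exact Nat.Coprime.pow _ _ ((Nat.coprime_primes q.2 r.2).mpr
      (fun h => hrq (Subtype.ext h).symm))
  obtain ⟨N, hN1, hN0⟩ := Nat.chineseRemainder hco 1 0
  have hEq2 : 2 ≤ E q := by
    calc 2 ≤ (q : ℕ) := q.2.two_le
      _ ≤ (q : ℕ) ^ (kf q + (m + 1)) := Nat.le_self_pow (by omega) _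
  have hN1' : N % E q = 1 := by
    have h1 : (1 : ℕ) % E q = 1 := Nat.mod_eq_of_lt (by omega)
    rw [Nat.ModEq] at hN1
    rw [hN1, h1]
  have hNpos : 1 ≤ N := by
    rcases Nat.eq_zero_or_pos N with rfl | h
    · simp at hN1'
    · exact h
  have hdvd1 : E q ∣ N - 1 := (Nat.modEq_iff_dvd' hNpos).mp hN1.symm
  have hdvdP : P ∣ N := Nat.modEq_zero_iff_dvd.mp hN0
  refine ⟨u ^ N, hVsub ?_, pow_mem (Subgroup.subset_closure hu) N⟩
  intro r hrI
  have hrF : r ∈ F := by rw [hF]; exact Finset.mem_insert_of_mem (hIfin.mem_toFinset.mpr hrI)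
  have hmf_le : mf r ≤ m := Finset.le_sup hrF
  rcases eq_or_ne r q with rfl | hrq
  · obtain ⟨t, ht⟩ := hdvd1
    have hcong : MCong (m + 2) ((↑(u r ^ N) : Matrix (Fin n) (Fin n) ℤ_[(r : ℕ)])) ↑(u r) := by
      have h3 : MCong (m + 2) ((↑(u r) : Matrix (Fin n) (Fin n) ℤ_[(r : ℕ)]) ^ (N - 1)) 1 := by
        rw [ht]; exact hEcong r t
      have h4 := h3.mul (MCong.refl (m + 2) (↑(u r) : Matrix (Fin n) (Fin n) ℤ_[(r : ℕ)]))
      rw [one_mul] at h4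
      have h5 : (↑(u r) : Matrix (Fin n) (Fin n) ℤ_[(r : ℕ)]) ^ (N - 1)
            * (↑(u r) : Matrix (Fin n) (Fin n) ℤ_[(r : ℕ)])
          = (↑(u r ^ N) : Matrix (Fin n) (Fin n) ℤ_[(r : ℕ)]) := by
        rw [Units.val_pow_eq_pow_val, ← pow_succ]
        congr 1
        omega
      rw [h5] at h4
      exact h4
    apply hmf r
    simp only [Function.update_self]
    exact hcong.mono (by omega)
  · have hErP : E r ∣ P := Finset.dvd_prod_of_mem E (Finset.mem_erase.mpr ⟨hrq, hrF⟩)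
    obtain ⟨s, hs⟩ := hErP.trans hdvdP
    have hcong : MCong (m + 2) ((↑(u r ^ N) : Matrix (Fin n) (Fin n) ℤ_[(r : ℕ)])) 1 := by
      rw [Units.val_pow_eq_pow_val, hs]
      exact hEcong r s
    apply hmf r
    simp only [Function.update_of_ne hrq, Pi.one_apply, Units.val_one]
    exact hcong.mono (by omega)

end Main

/-- Let `G = ∏_p GL(n, ℤ_p)` with the product topology and,
for each prime `p`, let `G_p ≤ G` be the subgroup of elements supported at
`p`.  Let `Γ ≤ G` be generated by a set `T` of elements `u = (u_p)_p` each of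
which satisfies: for every `p`, the image of `u_p` in `GL(n, F_p)` has order a
power of `p`.  Then `g = (g_p)_p ∈ G` lies in the closure of `Γ` if and only
if, for every prime `p`, the element of `G_p` with `p`-component `g_p` lies in
the closure of `Γ`. -/
theorem stmt_15 (n : ℕ) (T : Set (AdelicGL n))
    (hT : ∀ u ∈ T, ∀ p : Nat.Primes, ∃ k : ℕ,
      orderOf (redGL n p (u p)) = (p : ℕ) ^ k)
    (Γ : Subgroup (AdelicGL n)) (hΓ : Γ = Subgroup.closure T) :
    ∀ g : AdelicGL n,
      g ∈ closure (Γ : Set (AdelicGL n)) ↔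
      ∀ p : Nat.Primes,
        Function.update (1 : AdelicGL n) p (g p) ∈ closure (Γ : Set (AdelicGL n)) := by
  classical
  subst hΓ
  intro g
  set Γ' : Subgroup (AdelicGL n) := Subgroup.closure T with hΓ'
  set K : Subgroup (AdelicGL n) := Γ'.topologicalClosure with hK
  constructor
  · intro hg q
    have hcont := continuous_suppHom n q
    have key : Γ' ≤ K.comap (suppHom n q) := by
      rw [hΓ', Subgroup.closure_le]
      intro t ht
      have := supp_gen_mem n T hT ht q
      exact this
    have h1 : suppHom n q g ∈ closure ((suppHom n q) '' (Γ' : Set (AdelicGL n))) :=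
      image_closure_subset_closure_image hcont ⟨g, hg, rfl⟩
    have h2 : closure ((suppHom n q) '' (Γ' : Set (AdelicGL n)))
        ⊆ closure (closure (Γ' : Set (AdelicGL n))) := by
      apply closure_mono
      rintro _ ⟨x, hx, rfl⟩
      exact key hx
    rw [closure_closure] at h2
    exact h2 h1
  · intro h
    have main : ∀ S : Finset Nat.Primes, ∃ x : AdelicGL n,
        x ∈ closure (Γ' : Set (AdelicGL n)) ∧
        (∀ r ∈ S, x r = g r) ∧ (∀ r ∉ S, x r = 1) := by
      intro S
      induction S using Finset.induction_on with
      | empty =>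
        exact ⟨1, subset_closure (Subgroup.one_mem Γ'), by simp, fun r _ => rfl⟩
      | @insert a s ha ih =>
        obtain ⟨x, hxc, hxin, hxout⟩ := ih
        refine ⟨Function.update (1 : AdelicGL n) a (g a) * x, ?_, ?_, ?_⟩
        · exact K.mul_mem (h a) hxc
        · intro r hr
          rcases Finset.mem_insert.mp hr with rfl | hrs
          · rw [Pi.mul_apply, Function.update_self, hxout r ha, mul_one]
          · have hra : r ≠ a := by rintro rfl; exact ha hrs
            rw [Pi.mul_apply, Function.update_of_ne hra, hxin r hrs, Pi.one_apply, one_mul]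
        · intro r hr
          have h1 : r ≠ a := fun e => hr (e ▸ Finset.mem_insert_self a s)
          have h2 : r ∉ s := fun e => hr (Finset.mem_insert_of_mem e)
          rw [Pi.mul_apply, Function.update_of_ne h1, hxout r h2, Pi.one_apply, one_mul]
    have hgood : g ∈ closure (closure (Γ' : Set (AdelicGL n))) := by
      rw [mem_closure_iff_nhds]
      intro U hU
      rw [nhds_pi, Filter.mem_pi] at hU
      obtain ⟨I, hIfin, V, hV, hVsub⟩ := hU
      obtain ⟨x, hxc, hxin, -⟩ := main hIfin.toFinset
      refine ⟨x, hVsub ?_, hxc⟩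
      intro r hrI
      rw [hxin r (hIfin.mem_toFinset.mpr hrI)]
      exact mem_of_mem_nhds (hV r)
    rwa [closure_closure] at hgood
end
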